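/- arXiv:1608.03227 — 11 statements merged into one kernel-verified Lean document; each statement's English description precedes it below -/
import Mathlib

section
/- Let R be a commutative ring and F ∈ R. Let C₀, C₁, …, C_ℓ be R-modules together with R-linear maps d⁺ᵢ : Cᵢ → Cᵢ₋₁ (1 ≤ i ≤ ℓ) satisfying d⁺ᵢ ∘ d⁺ᵢ₊₁ = 0 for all i. Assume: (i) for every k ≥ 1, every chain endomorphism raising the index by k — i.e. every family of R-linear maps fᵢ : Cᵢ → Cᵢ₊ₖ (0 ≤ i ≤ ℓ−k) satisfying fᵢ₋₁ ∘ d⁺ᵢ = d⁺ᵢ₊ₖ ∘ fᵢ — is null-homotopic, i.e. there exist R-linear maps hᵢ : Cᵢ → Cᵢ₊ₖ₊₁ with fᵢ = d⁺ᵢ₊ₖ₊₁ ∘ hᵢ + hᵢ₋₁ ∘ d⁺ᵢ for all i; (ii) the degree-0 endomorphism F·id is null-homotopic, i.e. there exist R-linear maps hᵢ : Cᵢ → Cᵢ₊₁ with F·id_{Cᵢ} = d⁺ᵢ₊₁ ∘ hᵢ + hᵢ₋₁ ∘ d⁺ᵢ for all i. Then there exist R-linear maps d⁻ᵢⱼ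 : Cᵢ → Cⱼ for all pairs 0 ≤ i < j ≤ ℓ such that the R-linear endomorphism D = Σᵢ d⁺ᵢ + Σ_{i<j} d⁻ᵢⱼ of the direct sum ⊕ᵢ₌₀^ℓ Cᵢ satisfies D ∘ D = F · id. -/
/-- Composition of "matrices of linear maps" between the terms of a complex indexed by `ℕ`,
with intermediate index truncated at `ℓ` (all modules beyond `ℓ` are assumed trivial, so this
loses no information).  `matComp ℓ g f` represents the composite "first `f`, then `g`". -/
def matComp {R : Type*} [CommRing R] {C : ℕ → Type*}
    [∀ i, AddCommGroup (C i)] [∀ i, Module R (C i)] (ℓ : ℕ)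
    (g f : ∀ i j, C i →ₗ[R] C j) : ∀ i j, C i →ₗ[R] C j :=
  fun i j => ∑ m ∈ Finset.range (ℓ + 1), (g m j).comp (f i m)

section Helpers

variable {R : Type*} [CommRing R] {C : ℕ → Type*}
    [∀ i, AddCommGroup (C i)] [∀ i, Module R (C i)]

lemma map_src_zero {i j : ℕ} (h : Subsingleton (C i)) (f : C i →ₗ[R] C j) : f = 0 := by
  ext x; rw [Subsingleton.elim x 0, map_zero]; rfl

lemma map_tgt_zero {i j : ℕ} (h : Subsingleton (C j)) (f : C i →ₗ[R] C j) : f = 0 := by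
  ext x; exact Subsingleton.elim _ _

/-- the identity matrix of linear maps -/
def oneM : ∀ i j, C i →ₗ[R] C j :=
  fun i j => if h : i = j then h ▸ (LinearMap.id : C i →ₗ[R] C i) else 0

lemma oneM_same (i : ℕ) : (oneM i i : C i →ₗ[R] C i) = LinearMap.id := by
  simp [oneM]

lemma oneM_ne {i j : ℕ} (h : i ≠ j) : (oneM i j : C i →ₗ[R] C j) = 0 := by
  simp [oneM, h]

variable (ℓ : ℕ)

lemma matComp_addl (g₁ g₂ f : ∀ i j, C i →ₗ[R] C j) (i j : ℕ) :
    matComp ℓ (fun a b => g₁ a b + g₂ a b) f i j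
      = matComp ℓ g₁ f i j + matComp ℓ g₂ f i j := by
  simp [matComp, LinearMap.add_comp, Finset.sum_add_distrib]

lemma matComp_addr (g f₁ f₂ : ∀ i j, C i →ₗ[R] C j) (i j : ℕ) :
    matComp ℓ g (fun a b => f₁ a b + f₂ a b) i j
      = matComp ℓ g f₁ i j + matComp ℓ g f₂ i j := by
  simp [matComp, LinearMap.comp_add, Finset.sum_add_distrib]

lemma matComp_subl (g₁ g₂ f : ∀ i j, C i →ₗ[R] C j) (i j : ℕ) :
    matComp ℓ (fun a b => g₁ a b - g₂ a b) f i j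
      = matComp ℓ g₁ f i j - matComp ℓ g₂ f i j := by
  simp [matComp, LinearMap.sub_comp, Finset.sum_sub_distrib]

lemma matComp_subr (g f₁ f₂ : ∀ i j, C i →ₗ[R] C j) (i j : ℕ) :
    matComp ℓ g (fun a b => f₁ a b - f₂ a b) i j
      = matComp ℓ g f₁ i j - matComp ℓ g f₂ i j := by
  simp [matComp, LinearMap.comp_sub, Finset.sum_sub_distrib]

lemma matComp_smull (r : R) (g f : ∀ i j, C i →ₗ[R] C j) (i j : ℕ) :
    matComp ℓ (fun a b => r • g a b) f i j = r • matComp ℓ g f i j := by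
  simp [matComp, LinearMap.smul_comp, Finset.smul_sum]

lemma matComp_smulr (r : R) (g f : ∀ i j, C i →ₗ[R] C j) (i j : ℕ) :
    matComp ℓ g (fun a b => r • f a b) i j = r • matComp ℓ g f i j := by
  simp [matComp, LinearMap.comp_smul, Finset.smul_sum]

lemma matComp_assoc (h g f : ∀ i j, C i →ₗ[R] C j) (i j : ℕ) :
    matComp ℓ h (matComp ℓ g f) i j = matComp ℓ (matComp ℓ h g) f i j := by
  simp only [matComp]
  have l1 : ∀ (m : ℕ), (h m j).comp (∑ n ∈ Finset.range (ℓ+1), (g n m).comp (f i n))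
      = ∑ n ∈ Finset.range (ℓ+1), ((h m j).comp ((g n m).comp (f i n))) := by
    intro m; ext x; simp
  have l2 : ∀ (n : ℕ), (∑ m ∈ Finset.range (ℓ+1), (h m j).comp (g n m)).comp (f i n)
      = ∑ m ∈ Finset.range (ℓ+1), ((h m j).comp (g n m)).comp (f i n) := by
    intro n; ext x; simp
  simp only [l1, l2]
  rw [Finset.sum_comm]
  simp [LinearMap.comp_assoc]

lemma matComp_onel (hC : ∀ i, ℓ < i → Subsingleton (C i)) (f : ∀ i j, C i →ₗ[R] C j) (i j : ℕ) :
    matComp ℓ oneM f i j = f i j := by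
  by_cases hj : j ≤ ℓ
  · rw [matComp, Finset.sum_eq_single_of_mem j (by simp [Finset.mem_range]; omega)]
    · rw [oneM_same, LinearMap.id_comp]
    · intro m _ hm
      rw [oneM_ne hm, LinearMap.zero_comp]
  · rw [map_tgt_zero (hC j (by omega)) (f i j), matComp]
    apply Finset.sum_eq_zero
    intro m hm
    rw [oneM_ne (by simp [Finset.mem_range] at hm; omega), LinearMap.zero_comp]

lemma matComp_oner (hC : ∀ i, ℓ < i → Subsingleton (C i)) (f : ∀ i j, C i →ₗ[R] C j) (i j : ℕ) :
    matComp ℓ f oneM i j = f i j := by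
  by_cases hi : i ≤ ℓ
  · rw [matComp, Finset.sum_eq_single_of_mem i (by simp [Finset.mem_range]; omega)]
    · rw [oneM_same, LinearMap.comp_id]
    · intro m _ hm
      rw [oneM_ne (Ne.symm hm), LinearMap.comp_zero]
  · rw [map_src_zero (hC i (by omega)) (f i j), matComp]
    apply Finset.sum_eq_zero
    intro m hm
    rw [oneM_ne (by simp [Finset.mem_range] at hm; omega), LinearMap.comp_zero]

/-- `D` commutes with `D∘D - F·1`. -/
lemma comm_lemma (hC : ∀ i, ℓ < i → Subsingleton (C i)) (F : R)
    (D : ∀ i j, C i →ₗ[R] C j) :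
    ∀ i j, matComp ℓ D (fun a b => matComp ℓ D D a b - F • oneM a b) i j
         = matComp ℓ (fun a b => matComp ℓ D D a b - F • oneM a b) D i j := by
  intro i j
  rw [matComp_subr, matComp_subl, matComp_smulr, matComp_smull,
    matComp_oner ℓ hC, matComp_onel ℓ hC, matComp_assoc]

/-- the degree-`n'` component of `E` is a chain map if `E` commutes with `d + dm` and
`E` vanishes below degree `n'`. -/
lemma chain_lemma (d dm E : ∀ i j, C i →ₗ[R] C j)
    (hddeg : ∀ i j, i ≠ j + 1 → d i j = 0)
    (hdm : ∀ i j, ¬ i < j → dm i j = 0)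
    (n' : ℕ)
    (hElow : ∀ i j, j < i + n' → E i j = 0)
    (hcomm : ∀ i j, matComp ℓ (fun a b => d a b + dm a b) E i j
                  = matComp ℓ E (fun a b => d a b + dm a b) i j) :
    ∀ i j, matComp ℓ (fun a b => if b = a + n' then E a b else 0) d i j
         = matComp ℓ d (fun a b => if b = a + n' then E a b else 0) i j := by
  intro i j
  by_cases hj : j + 1 = i + n'
  · have e1 : matComp ℓ d (fun a b => if b = a + n' then E a b else 0) i j
        = matComp ℓ (fun a b => d a b + dm a b) E i j := by
      simp only [matComp]
      apply Finset.sum_congr rfl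
      intro m _
      by_cases hm : m = i + n'
      · rw [if_pos hm, hdm m j (by omega), add_zero]
      · rw [if_neg hm]
        by_cases hm2 : m < i + n'
        · rw [hElow i m hm2]
          simp
        · rw [hddeg m j (by omega), hdm m j (by omega)]
          simp
    have e2 : matComp ℓ (fun a b => if b = a + n' then E a b else 0) d i j
        = matComp ℓ E (fun a b => d a b + dm a b) i j := by
      simp only [matComp]
      apply Finset.sum_congr rfl
      intro m _
      by_cases hm : i = m + 1
      · rw [if_pos (by omega : j = m + n'), hdm i m (by omega), add_zero]
      · rw [hddeg i m hm]
        by_cases hm2 : i < m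
        · rw [hElow m j (by omega)]
          simp
        · rw [hdm i m hm2]
          simp
    rw [e2, e1]
    exact (hcomm i j).symm
  · have z1 : matComp ℓ (fun a b => if b = a + n' then E a b else 0) d i j = 0 := by
      simp only [matComp]
      apply Finset.sum_eq_zero
      intro m _
      by_cases hm : i = m + 1
      · rw [if_neg (by omega), LinearMap.zero_comp]
      · rw [hddeg i m hm, LinearMap.comp_zero]
    have z2 : matComp ℓ d (fun a b => if b = a + n' then E a b else 0) i j = 0 := by
      simp only [matComp]
      apply Finset.sum_eq_zero
      intro m _
      by_cases hm : m = i + n'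
      · rw [hddeg m j (by omega), LinearMap.zero_comp]
      · rw [if_neg hm, LinearMap.comp_zero]
    rw [z1, z2]

/-- the inductive step: improve the bound on where `D∘D - F·1` vanishes. -/
lemma step_lemma (hC : ∀ i, ℓ < i → Subsingleton (C i)) (F : R)
    (d dm : ∀ i j, C i →ₗ[R] C j)
    (hddeg : ∀ i j, i ≠ j + 1 → d i j = 0)
    (n : ℕ)
    (hdm : ∀ i j, ¬ i < j → dm i j = 0)
    (hE : ∀ i j, j < i + (n+1) →
        matComp ℓ (fun a b => d a b + dm a b) (fun a b => d a b + dm a b) i j = F • oneM i j)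
    (hnull : ∀ f : ∀ i j, C i →ₗ[R] C j,
      (∀ i j, j ≠ i + (n+1) → f i j = 0) →
      (∀ i j, matComp ℓ f d i j = matComp ℓ d f i j) →
      ∃ h : ∀ i j, C i →ₗ[R] C j,
        (∀ i j, j ≠ i + (n+1) + 1 → h i j = 0) ∧
        (∀ i j, f i j = matComp ℓ d h i j + matComp ℓ h d i j)) :
    ∃ dm' : ∀ i j, C i →ₗ[R] C j,
      (∀ i j, ¬ i < j → dm' i j = 0) ∧
      (∀ i j, j < i + (n+2) →
        matComp ℓ (fun a b => d a b + dm' a b) (fun a b => d a b + dm' a b) i j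
          = F • oneM i j) := by
  have hElow : ∀ i j, j < i + (n+1) →
      (matComp ℓ (fun a b => d a b + dm a b) (fun a b => d a b + dm a b) i j
        - F • oneM i j) = 0 :=
    fun i j hj => by rw [hE i j hj, sub_self]
  have hcomm := comm_lemma ℓ hC F (fun a b => d a b + dm a b)
  have hchain := chain_lemma ℓ d dm
    (fun a b => matComp ℓ (fun a b => d a b + dm a b) (fun a b => d a b + dm a b) a b
      - F • oneM a b)
    hddeg hdm (n+1) hElow hcomm
  obtain ⟨h, hh1, hh2⟩ := hnull
    (fun a b => if b = a + (n+1) then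
      (matComp ℓ (fun a b => d a b + dm a b) (fun a b => d a b + dm a b) a b
        - F • oneM a b) else 0)
    (fun i j hij => if_neg hij) hchain
  refine ⟨fun a b => dm a b - h a b, ?_, ?_⟩
  · intro i j hij
    show dm i j - h i j = 0
    rw [hdm i j hij, hh1 i j (by omega), sub_zero]
  · intro i j hj
    show matComp ℓ (fun a b => d a b + (dm a b - h a b))
        (fun a b => d a b + (dm a b - h a b)) i j = F • oneM i j
    have expand : matComp ℓ (fun a b => d a b + (dm a b - h a b))
        (fun a b => d a b + (dm a b - h a b)) i j
        = matComp ℓ (fun a b => d a b + dm a b) (fun a b => d a b + dm a b) i j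
          - (matComp ℓ d h i j + matComp ℓ h d i j)
          - matComp ℓ dm h i j - matComp ℓ h dm i j + matComp ℓ h h i j := by
      simp only [matComp, LinearMap.sub_comp, LinearMap.comp_sub, LinearMap.add_comp,
        LinearMap.comp_add, Finset.sum_sub_distrib, Finset.sum_add_distrib]
      abel
    have hz1 : matComp ℓ dm h i j = 0 := by
      simp only [matComp]
      apply Finset.sum_eq_zero
      intro m _
      by_cases hm : m = i + (n+1) + 1
      · rw [hdm m j (by omega), LinearMap.zero_comp]
      · rw [hh1 i m (by omega), LinearMap.comp_zero]
    have hz2 : matComp ℓ h dm i j = 0 := by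
      simp only [matComp]
      apply Finset.sum_eq_zero
      intro m _
      by_cases hm : i < m
      · rw [hh1 m j (by omega), LinearMap.zero_comp]
      · rw [hdm i m hm, LinearMap.comp_zero]
    have hz3 : matComp ℓ h h i j = 0 := by
      simp only [matComp]
      apply Finset.sum_eq_zero
      intro m _
      by_cases hm : m = i + (n+1) + 1
      · rw [hh1 m j (by omega), LinearMap.zero_comp]
      · rw [hh1 i m (by omega), LinearMap.comp_zero]
    have hA : (if j = i + (n+1) then
        (matComp ℓ (fun a b => d a b + dm a b) (fun a b => d a b + dm a b) i j
          - F • oneM i j) else 0) = matComp ℓ d h i j + matComp ℓ h d i j := hh2 i j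
    rw [expand, hz1, hz2, hz3, ← hA, sub_zero, sub_zero, add_zero]
    by_cases hcase : j = i + (n+1)
    · rw [if_pos hcase]
      exact sub_sub_cancel _ _
    · rw [if_neg hcase, sub_zero]
      exact hE i j (by omega)

end Helpers

/-- **Extension lemma for matrix factorizations.**  A bounded complex
`C₀ ← C₁ ← ⋯ ← C_ℓ` (the differential `d` has degree `-1`, i.e. `d i j = 0` unless `i = j+1`)
such that every index-raising chain endomorphism is null-homotopic and such that `F · id` is
null-homotopic can be completed, by strictly index-raising "negative" differentials `dm`,
to a two-periodic curved differential `D = d + dm` with `D ∘ D = F · id`. -/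
theorem extension_lemma_matrix_factorization
    {R : Type*} [CommRing R] (F : R) (ℓ : ℕ)
    (C : ℕ → Type*) [∀ i, AddCommGroup (C i)] [∀ i, Module R (C i)]
    (hC : ∀ i, ℓ < i → Subsingleton (C i))
    (d : ∀ i j, C i →ₗ[R] C j)
    (hddeg : ∀ i j, i ≠ j + 1 → d i j = 0)
    (hdd : ∀ i j, matComp ℓ d d i j = 0)
    (hnull : ∀ k : ℕ, 1 ≤ k → ∀ f : ∀ i j, C i →ₗ[R] C j,
      (∀ i j, j ≠ i + k → f i j = 0) →
      (∀ i j, matComp ℓ f d i j = matComp ℓ d f i j) →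
      ∃ h : ∀ i j, C i →ₗ[R] C j,
        (∀ i j, j ≠ i + k + 1 → h i j = 0) ∧
        (∀ i j, f i j = matComp ℓ d h i j + matComp ℓ h d i j))
    (hF : ∃ h : ∀ i j, C i →ₗ[R] C j,
        (∀ i j, j ≠ i + 1 → h i j = 0) ∧
        (∀ i, F • (LinearMap.id : C i →ₗ[R] C i)
            = matComp ℓ d h i i + matComp ℓ h d i i)) :
    ∃ dm : ∀ i j, C i →ₗ[R] C j,
      (∀ i j, ¬ i < j → dm i j = 0) ∧
      (∀ i, matComp ℓ (fun i j => d i j + dm i j) (fun i j => d i j + dm i j) i i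
          = F • (LinearMap.id : C i →ₗ[R] C i)) ∧
      (∀ i j, i ≠ j →
        matComp ℓ (fun i j => d i j + dm i j) (fun i j => d i j + dm i j) i j = 0) := by
  obtain ⟨H, hH1, hH2⟩ := hF
  have key : ∀ n : ℕ, ∃ dm : ∀ i j, C i →ₗ[R] C j,
      (∀ i j, ¬ i < j → dm i j = 0) ∧
      (∀ i j, j < i + (n+1) →
        matComp ℓ (fun a b => d a b + dm a b) (fun a b => d a b + dm a b) i j
          = F • oneM i j) := by
    intro n
    induction n with
    | zero =>
      refine ⟨H, fun i j hij => hH1 i j (by omega), ?_⟩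
      intro i j hj
      rw [matComp_addl, matComp_addr, matComp_addr]
      have hHH : matComp ℓ H H i j = 0 := by
        simp only [matComp]
        apply Finset.sum_eq_zero
        intro m _
        by_cases hm : m = i + 1
        · rw [hH1 m j (by omega), LinearMap.zero_comp]
        · rw [hH1 i m (by omega), LinearMap.comp_zero]
      rw [hdd i j, hHH, zero_add, add_zero]
      by_cases hij : i = j
      · subst hij
        rw [oneM_same]
        exact (hH2 i).symm
      · have h1 : matComp ℓ d H i j = 0 := by
          simp only [matComp]
          apply Finset.sum_eq_zero
          intro m _
          by_cases hm : m = i + 1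
          · rw [hddeg m j (by omega), LinearMap.zero_comp]
          · rw [hH1 i m (by omega), LinearMap.comp_zero]
        have h2 : matComp ℓ H d i j = 0 := by
          simp only [matComp]
          apply Finset.sum_eq_zero
          intro m _
          by_cases hm : i = m + 1
          · rw [hH1 m j (by omega), LinearMap.zero_comp]
          · rw [hddeg i m hm, LinearMap.comp_zero]
        rw [h1, h2, oneM_ne hij, smul_zero, add_zero]
    | succ n ih =>
      obtain ⟨dm, hdm, hE⟩ := ih
      exact step_lemma ℓ hC F d dm hddeg n hdm hE (hnull (n+1) (by omega))
  obtain ⟨dm, hdm, hE⟩ := key ℓ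
  have hEall : ∀ i j,
      matComp ℓ (fun a b => d a b + dm a b) (fun a b => d a b + dm a b) i j
        = F • oneM i j := by
    intro i j
    by_cases hj : j < i + (ℓ+1)
    · exact hE i j hj
    · have hs : Subsingleton (C j) := hC j (by omega)
      exact (map_tgt_zero hs _).trans (map_tgt_zero hs _).symm
  refine ⟨dm, hdm, ?_, ?_⟩
  · intro i
    have := hEall i i
    rw [oneM_same] at this
    exact this
  · intro i j hij
    have := hEall i j
    rw [oneM_ne hij, smul_zero] at this
    exact this
end

section
/- Let R be a commutative ring and F ∈ R. Let C₀, C₁, …, C_ℓ be R-modules with R-linear maps d⁺ᵢ : Cᵢ → Cᵢ₋₁ (1 ≤ i ≤ ℓ) satisfying d⁺ᵢ ∘ d⁺ᵢ₊₁ = 0, and assume: (i) for every k ≥ 1, every family fᵢ : Cᵢ → Cᵢ₊ₖ with fᵢ₋₁ ∘ d⁺ᵢ = d⁺ᵢ₊ₖ ∘ fᵢ is null-homotopic (there exist hᵢ : Cᵢ → Cᵢ₊ₖ₊₁ with fᵢ = d⁺ ∘ hᵢ + hᵢ₋₁ ∘ d⁺); (ii) F·id is null-homotopic in the same sense. Suppose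 d⁻ᵢⱼ and d̃⁻ᵢⱼ : Cᵢ → Cⱼ (for i < j) are two families of maps such that both D = d⁺ + Σd⁻ᵢⱼ and D̃ = d⁺ + Σd̃⁻ᵢⱼ, as endomorphisms of ⊕ᵢ Cᵢ, satisfy D² = F·id and D̃² = F·id. Then there exists an R-linear bijection Ψ of ⊕ᵢ Cᵢ of the form Ψ = id + Σ_{i<j} Ψᵢⱼ with Ψᵢⱼ : Cᵢ → Cⱼ, such that Ψ ∘ D = D̃ ∘ Ψ. -/
namespace MatrixFactorization

variable {R : Type*} [CommRing R] {C : ℕ → Type*} [∀ i, AddCommGroup (C i)]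
  [∀ i, Module R (C i)] {ℓ : ℕ}

abbrev BlockMatrix (R : Type*) [CommRing R] (C : ℕ → Type*) [∀ i, AddCommGroup (C i)]
    [∀ i, Module R (C i)] :=
  ∀ i j, C i →ₗ[R] C j

theorem matComp_add_left (g g' f : BlockMatrix R C) :
    matComp ℓ (g + g') f = matComp ℓ g f + matComp ℓ g' f := by
  funext i j
  simp [matComp, LinearMap.add_comp, Finset.sum_add_distrib]

theorem matComp_add_right (g f f' : BlockMatrix R C) :
    matComp ℓ g (f + f') = matComp ℓ g f + matComp ℓ g f' := by
  funext i j
  simp [matComp, LinearMap.comp_add, Finset.sum_add_distrib]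

theorem matComp_sub_left (g g' f : BlockMatrix R C) :
    matComp ℓ (g - g') f = matComp ℓ g f - matComp ℓ g' f := by
  funext i j
  simp [matComp, LinearMap.sub_comp, Finset.sum_sub_distrib]

theorem matComp_sub_right (g f f' : BlockMatrix R C) :
    matComp ℓ g (f - f') = matComp ℓ g f - matComp ℓ g f' := by
  funext i j
  simp [matComp, LinearMap.comp_sub, Finset.sum_sub_distrib]

theorem matComp_smul_left (c : R) (g f : BlockMatrix R C) :
    matComp ℓ (c • g) f = c • matComp ℓ g f := by
  funext i j
  simp [matComp, LinearMap.smul_comp, Finset.smul_sum]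

theorem matComp_smul_right (c : R) (g f : BlockMatrix R C) :
    matComp ℓ g (c • f) = c • matComp ℓ g f := by
  funext i j
  simp [matComp, LinearMap.comp_smul, Finset.smul_sum]

theorem matComp_assoc (h g f : BlockMatrix R C) :
    matComp ℓ (matComp ℓ h g) f = matComp ℓ h (matComp ℓ g f) := by
  funext i j
  ext x
  simp only [matComp, LinearMap.sum_apply, LinearMap.comp_apply, map_sum]
  exact Finset.sum_comm

def matId : BlockMatrix R C := fun i j =>
  if h : i = j then h ▸ LinearMap.id else 0

@[simp]
theorem matId_self (i : ℕ) : (matId : BlockMatrix R C) i i = LinearMap.id := by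
  simp [matId]

theorem matId_of_ne {i j : ℕ} (h : i ≠ j) : (matId : BlockMatrix R C) i j = 0 :=
  dif_neg h

theorem eq_smul_matId {f : BlockMatrix R C} {c : R}
    (hdiag : ∀ i, f i i = c • LinearMap.id) (hoff : ∀ i j, i ≠ j → f i j = 0) :
    f = c • matId := by
  funext i j
  by_cases h : i = j
  · subst h
    simp [hdiag]
  · simp [hoff i j h, matId_of_ne h]

theorem linearMap_eq_zero_of_lt_target (hC : ∀ i, ℓ < i → Subsingleton (C i)) {i j : ℕ}
    (hj : ℓ < j) (f : C i →ₗ[R] C j) : f = 0 :=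
  have := hC j hj
  Subsingleton.elim _ _

theorem linearMap_eq_zero_of_lt_source (hC : ∀ i, ℓ < i → Subsingleton (C i)) {i j : ℕ}
    (hi : ℓ < i) (f : C i →ₗ[R] C j) : f = 0 :=
  have := hC i hi
  Subsingleton.elim _ _

theorem matComp_matId_left (hC : ∀ i, ℓ < i → Subsingleton (C i)) (f : BlockMatrix R C) :
    matComp ℓ matId f = f := by
  funext i j
  rw [matComp, Finset.sum_eq_single j, matId_self, LinearMap.id_comp]
  · intro m _ hm
    rw [matId_of_ne hm, LinearMap.zero_comp]
  · intro hj
    rw [linearMap_eq_zero_of_lt_target hC (by simpa using hj) (f i j), LinearMap.comp_zero]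

theorem matComp_matId_right (hC : ∀ i, ℓ < i → Subsingleton (C i)) (f : BlockMatrix R C) :
    matComp ℓ f matId = f := by
  funext i j
  rw [matComp, Finset.sum_eq_single i, matId_self, LinearMap.comp_id]
  · intro m _ hm
    rw [matId_of_ne hm.symm, LinearMap.comp_zero]
  · intro hi
    rw [linearMap_eq_zero_of_lt_source hC (by simpa using hi) (f i j), LinearMap.zero_comp]

def RaisesBy (n : ℕ) (f : BlockMatrix R C) : Prop :=
  ∀ i j, j < i + n → f i j = 0

def IsHomogeneous (k : ℕ) (f : BlockMatrix R C) : Prop :=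
  ∀ i j, j ≠ i + k → f i j = 0

theorem raisesBy_one_iff {f : BlockMatrix R C} :
    RaisesBy 1 f ↔ ∀ i j, ¬ i < j → f i j = 0 :=
  forall₂_congr fun _ _ => by rw [Nat.lt_succ_iff, not_lt]

namespace RaisesBy

variable {m n : ℕ} {f g : BlockMatrix R C}

theorem mono (h : m ≤ n) (hf : RaisesBy n f) : RaisesBy m f :=
  fun i j hj => hf i j (by omega)

theorem add (hf : RaisesBy n f) (hg : RaisesBy n g) : RaisesBy n (f + g) :=
  fun i j hj => by simp [hf i j hj, hg i j hj]

theorem sub (hf : RaisesBy n f) (hg : RaisesBy n g) : RaisesBy n (f - g) :=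
  fun i j hj => by simp [hf i j hj, hg i j hj]

theorem neg (hf : RaisesBy n f) : RaisesBy n (-f) :=
  fun i j hj => by simp [hf i j hj]

theorem comp (hf : RaisesBy m f) (hg : RaisesBy n g) : RaisesBy (m + n) (matComp ℓ g f) := by
  intro i j hj
  refine Finset.sum_eq_zero fun k _ => ?_
  by_cases hk : k < i + m
  · rw [hf i k hk, LinearMap.comp_zero]
  · rw [hg k j (by omega), LinearMap.zero_comp]

theorem eq_zero (hC : ∀ i, ℓ < i → Subsingleton (C i)) (hf : RaisesBy (ℓ + 1) f) : f = 0 := by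
  funext i j
  by_cases hj : j < i + (ℓ + 1)
  · exact hf i j hj
  · exact linearMap_eq_zero_of_lt_target hC (by omega) (f i j)

end RaisesBy

namespace IsHomogeneous

variable {k : ℕ} {f g : BlockMatrix R C}

theorem raisesBy (hf : IsHomogeneous k f) : RaisesBy k f :=
  fun i j hj => hf i j (by omega)

theorem add (hf : IsHomogeneous k f) (hg : IsHomogeneous k g) : IsHomogeneous k (f + g) :=
  fun i j hj => by simp [hf i j hj, hg i j hj]

theorem eq_zero_of_raisesBy (hf : IsHomogeneous k f) (hf' : RaisesBy (k + 1) f) : f = 0 := by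
  funext i j
  by_cases hj : j = i + k
  · exact hf' i j (by omega)
  · exact hf i j hj

end IsHomogeneous

def homPart (k : ℕ) (f : BlockMatrix R C) : BlockMatrix R C :=
  fun i j => if j = i + k then f i j else 0

theorem isHomogeneous_homPart (k : ℕ) (f : BlockMatrix R C) : IsHomogeneous k (homPart k f) :=
  fun _ _ hj => if_neg hj

theorem RaisesBy.sub_homPart {k : ℕ} {f : BlockMatrix R C} (hf : RaisesBy k f) :
    RaisesBy (k + 1) (f - homPart k f) := by
  intro i j hj
  by_cases h : j = i + k
  · simp [homPart, h]
  · simp [homPart, h, hf i j (by omega)]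

section Differential

variable {d f : BlockMatrix R C} {n : ℕ}

theorem RaisesBy.d_matComp (hd : ∀ i j, i ≠ j + 1 → d i j = 0) (hf : RaisesBy (n + 1) f) :
    RaisesBy n (matComp ℓ d f) := by
  intro i j hj
  refine Finset.sum_eq_zero fun m _ => ?_
  by_cases hm : m < i + (n + 1)
  · rw [hf i m hm, LinearMap.comp_zero]
  · rw [hd m j (by omega), LinearMap.zero_comp]

theorem RaisesBy.matComp_d (hd : ∀ i j, i ≠ j + 1 → d i j = 0) (hf : RaisesBy (n + 1) f) :
    RaisesBy n (matComp ℓ f d) := by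
  intro i j hj
  refine Finset.sum_eq_zero fun m _ => ?_
  by_cases hm : i = m + 1
  · rw [hf m j (by omega), LinearMap.zero_comp]
  · rw [hd i m hm, LinearMap.comp_zero]

theorem IsHomogeneous.d_matComp (hd : ∀ i j, i ≠ j + 1 → d i j = 0)
    (hf : IsHomogeneous (n + 1) f) : IsHomogeneous n (matComp ℓ d f) := by
  intro i j hj
  refine Finset.sum_eq_zero fun m _ => ?_
  by_cases hm : m = i + (n + 1)
  · rw [hd m j (by omega), LinearMap.zero_comp]
  · rw [hf i m hm, LinearMap.comp_zero]

theorem IsHomogeneous.matComp_d (hd : ∀ i j, i ≠ j + 1 → d i j = 0)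
    (hf : IsHomogeneous (n + 1) f) : IsHomogeneous n (matComp ℓ f d) := by
  intro i j hj
  refine Finset.sum_eq_zero fun m _ => ?_
  by_cases hm : i = m + 1
  · rw [hf m j (by omega), LinearMap.zero_comp]
  · rw [hd i m hm, LinearMap.comp_zero]

end Differential

def twist (f : BlockMatrix R C) : BlockMatrix R C :=
  fun i j => (-1 : R) ^ i • f i j

theorem twist_twist (f : BlockMatrix R C) : twist (twist f) = f := by
  funext i j
  simp [twist, smul_smul, ← mul_pow]

theorem twist_add (f g : BlockMatrix R C) : twist (f + g) = twist f + twist g := by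
  funext i j
  simp [twist, smul_add]

theorem twist_neg (f : BlockMatrix R C) : twist (-f) = -twist f := by
  funext i j
  simp [twist]

theorem IsHomogeneous.twist {k : ℕ} {f : BlockMatrix R C} (hf : IsHomogeneous k f) :
    IsHomogeneous k (twist f) :=
  fun i j hj => by simp [MatrixFactorization.twist, hf i j hj]

theorem matComp_twist_right (g f : BlockMatrix R C) :
    matComp ℓ g (twist f) = twist (matComp ℓ g f) := by
  funext i j
  simp [matComp, twist, LinearMap.comp_smul, Finset.smul_sum]

theorem matComp_twist_left_of_degree {d : BlockMatrix R C}
    (hd : ∀ i j, i ≠ j + 1 → d i j = 0) (g : BlockMatrix R C) :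
    matComp ℓ (twist g) d = -twist (matComp ℓ g d) := by
  funext i j
  simp only [matComp, twist, Pi.neg_apply, Finset.smul_sum, ← Finset.sum_neg_distrib]
  refine Finset.sum_congr rfl fun m _ => ?_
  by_cases hm : i = m + 1
  · subst hm
    rw [LinearMap.smul_comp, pow_succ, mul_neg_one, neg_smul, neg_neg]
  · simp [hd i m hm]

def PosDegreeChainMapsNullhomotopic (ℓ : ℕ) (d : BlockMatrix R C) : Prop :=
  ∀ k : ℕ, 1 ≤ k → ∀ f : BlockMatrix R C, IsHomogeneous k f →
    (∀ i j, matComp ℓ f d i j = matComp ℓ d f i j) →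
    ∃ h : BlockMatrix R C, IsHomogeneous (k + 1) h ∧
      ∀ i j, f i j = matComp ℓ d h i j + matComp ℓ h d i j

theorem exists_homogeneous_commutator_eq {d : BlockMatrix R C}
    (hd : ∀ i j, i ≠ j + 1 → d i j = 0) (hnull : PosDegreeChainMapsNullhomotopic ℓ d)
    {k : ℕ} (hk : 1 ≤ k) {G : BlockMatrix R C} (hG : IsHomogeneous k G)
    (hanti : matComp ℓ d G + matComp ℓ G d = 0) :
    ∃ S : BlockMatrix R C, IsHomogeneous (k + 1) S ∧ matComp ℓ d S - matComp ℓ S d = G := by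
  have hchain : matComp ℓ (twist G) d = matComp ℓ d (twist G) := by
    rw [matComp_twist_left_of_degree hd, matComp_twist_right, eq_neg_of_add_eq_zero_right hanti,
      twist_neg, neg_neg]
  obtain ⟨h, hh, hhom⟩ :=
    hnull k hk (twist G) hG.twist fun i j => congrFun (congrFun hchain i) j
  have hhom' : twist G = matComp ℓ d h + matComp ℓ h d := funext fun i => funext (hhom i)
  refine ⟨twist h, hh.twist, ?_⟩
  rw [matComp_twist_right, matComp_twist_left_of_degree hd, sub_neg_eq_add, ← twist_add, ← hhom',
    twist_twist]

theorem anticommute_homPart {d dm dm' E : BlockMatrix R C}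
    (hd : ∀ i j, i ≠ j + 1 → d i j = 0) (hdm : RaisesBy 1 dm) (hdm' : RaisesBy 1 dm') {n : ℕ}
    (hE : RaisesBy (n + 1) E) (hrel : matComp ℓ (d + dm') E + matComp ℓ E (d + dm) = 0) :
    matComp ℓ d (homPart (n + 1) E) + matComp ℓ (homPart (n + 1) E) d = 0 := by
  set G := homPart (n + 1) E
  have hrest : RaisesBy (n + 2) (E - G) := hE.sub_homPart
  have hlow : RaisesBy (n + 1) (matComp ℓ dm' E + matComp ℓ E dm) :=
    ((hE.comp hdm').mono (by omega)).add ((hdm.comp hE).mono (by omega))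
  have heq : matComp ℓ d G + matComp ℓ G d = -(matComp ℓ d (E - G) + matComp ℓ (E - G) d
      + (matComp ℓ dm' E + matComp ℓ E dm)) := by
    rw [eq_neg_iff_add_eq_zero, ← hrel, matComp_sub_right, matComp_sub_left, matComp_add_left,
      matComp_add_right]
    abel
  have hG : IsHomogeneous (n + 1) G := isHomogeneous_homPart _ _
  refine ((hG.d_matComp hd).add (hG.matComp_d hd)).eq_zero_of_raisesBy ?_
  rw [heq]
  exact (((hrest.d_matComp hd).add (hrest.matComp_d hd)).add hlow).neg

theorem intertwining_defect_anticommute (hC : ∀ i, ℓ < i → Subsingleton (C i)) {F : R}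
    {D D' Ψ : BlockMatrix R C} (hD : matComp ℓ D D = F • matId)
    (hD' : matComp ℓ D' D' = F • matId) :
    matComp ℓ D' (matComp ℓ Ψ D - matComp ℓ D' Ψ) + matComp ℓ (matComp ℓ Ψ D - matComp ℓ D' Ψ) D
      = 0 := by
  rw [matComp_sub_right, matComp_sub_left, ← matComp_assoc D' D' Ψ, hD', matComp_assoc Ψ D D, hD,
    matComp_smul_left, matComp_smul_right, matComp_matId_left hC, matComp_matId_right hC,
    matComp_assoc]
  abel

theorem exists_unipotent_intertwiner_mod (hC : ∀ i, ℓ < i → Subsingleton (C i))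
    {d dm dm' : BlockMatrix R C} (hd : ∀ i j, i ≠ j + 1 → d i j = 0)
    (hnull : PosDegreeChainMapsNullhomotopic ℓ d) (hdm : RaisesBy 1 dm) (hdm' : RaisesBy 1 dm')
    {F : R} (hD : matComp ℓ (d + dm) (d + dm) = F • matId)
    (hD' : matComp ℓ (d + dm') (d + dm') = F • matId) (n : ℕ) :
    ∃ S : BlockMatrix R C, RaisesBy 1 S ∧
      RaisesBy (n + 1) (matComp ℓ (matId + S) (d + dm) - matComp ℓ (d + dm') (matId + S)) := by
  induction n with
  | zero =>
    refine ⟨0, fun _ _ _ => rfl, ?_⟩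
    rw [add_zero, matComp_matId_left hC, matComp_matId_right hC, add_sub_add_left_eq_sub]
    exact hdm.sub hdm'
  | succ n ih =>
    obtain ⟨S, hS, hE⟩ := ih
    set E := matComp ℓ (matId + S) (d + dm) - matComp ℓ (d + dm') (matId + S) with hEdef
    obtain ⟨S', hS', hS'G⟩ := exists_homogeneous_commutator_eq hd hnull (Nat.le_add_left 1 n)
      (isHomogeneous_homPart (n + 1) E)
      (anticommute_homPart hd hdm hdm' hE (intertwining_defect_anticommute hC hD hD'))
    have hdefect : matComp ℓ (matId + (S + S')) (d + dm) - matComp ℓ (d + dm') (matId + (S + S'))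
        = (E - homPart (n + 1) E) + (matComp ℓ S' dm - matComp ℓ dm' S') := by
      rw [← hS'G, hEdef]
      simp only [matComp_add_left, matComp_add_right]
      abel
    refine ⟨S + S', hS.add (hS'.raisesBy.mono (by omega)), ?_⟩
    rw [hdefect]
    exact hE.sub_homPart.add (((hdm.comp hS'.raisesBy).mono (by omega)).sub
      ((hS'.raisesBy.comp hdm').mono (by omega)))

theorem exists_rightInverse_unipotent (hC : ∀ i, ℓ < i → Subsingleton (C i))
    {S : BlockMatrix R C} (hS : RaisesBy 1 S) :
    ∃ S₂ : BlockMatrix R C, RaisesBy 1 S₂ ∧ matComp ℓ (matId + S) (matId + S₂) = matId := by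
  have approx : ∀ n, ∃ S₂ : BlockMatrix R C, RaisesBy 1 S₂ ∧
      RaisesBy (n + 1) (matId - matComp ℓ (matId + S) (matId + S₂)) := by
    intro n
    induction n with
    | zero =>
      refine ⟨0, fun _ _ _ => rfl, ?_⟩
      rw [add_zero, matComp_matId_right hC, sub_add_cancel_left]
      exact hS.neg
    | succ n ih =>
      obtain ⟨S₂, hS₂, hE⟩ := ih
      set E := matId - matComp ℓ (matId + S) (matId + S₂) with hEdef
      have hnext : matId - matComp ℓ (matId + S) (matId + (S₂ + E)) = -matComp ℓ S E := by
        rw [← add_assoc, matComp_add_right, matComp_add_left matId S E, matComp_matId_left hC,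
          hEdef]
        abel
      refine ⟨S₂ + E, hS₂.add (hE.mono (by omega)), ?_⟩
      rw [hnext]
      exact (hE.comp hS).neg
  obtain ⟨S₂, hS₂, hE⟩ := approx ℓ
  exact ⟨S₂, hS₂, (sub_eq_zero.mp (hE.eq_zero hC)).symm⟩

/-- A right inverse of `id + S` has the same shape, so it has a right inverse itself, which must
then be `id + S`. -/
theorem exists_inverse_unipotent (hC : ∀ i, ℓ < i → Subsingleton (C i))
    {S : BlockMatrix R C} (hS : RaisesBy 1 S) :
    ∃ T : BlockMatrix R C,
      matComp ℓ (matId + S) T = matId ∧ matComp ℓ T (matId + S) = matId := by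
  obtain ⟨S₂, hS₂, hright⟩ := exists_rightInverse_unipotent hC hS
  obtain ⟨S₃, -, hright₂⟩ := exists_rightInverse_unipotent hC hS₂
  have hS₃ : matId + S = matId + S₃ :=
    calc matId + S = matComp ℓ (matId + S) (matComp ℓ (matId + S₂) (matId + S₃)) := by
          rw [hright₂, matComp_matId_right hC]
      _ = matId + S₃ := by rw [← matComp_assoc, hright, matComp_matId_left hC]
  exact ⟨matId + S₂, hright, by rw [hS₃, hright₂]⟩

end MatrixFactorization

open MatrixFactorization

theorem uniqueness_lemma_matrix_factorization_general
    {R : Type*} [CommRing R] (F : R) (ℓ : ℕ)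
    (C : ℕ → Type*) [∀ i, AddCommGroup (C i)] [∀ i, Module R (C i)]
    (hC : ∀ i, ℓ < i → Subsingleton (C i))
    (d : ∀ i j, C i →ₗ[R] C j)
    (hddeg : ∀ i j, i ≠ j + 1 → d i j = 0)
    (hnull : ∀ k : ℕ, 1 ≤ k → ∀ f : ∀ i j, C i →ₗ[R] C j,
      (∀ i j, j ≠ i + k → f i j = 0) →
      (∀ i j, matComp ℓ f d i j = matComp ℓ d f i j) →
      ∃ h : ∀ i j, C i →ₗ[R] C j,
        (∀ i j, j ≠ i + k + 1 → h i j = 0) ∧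
        (∀ i j, f i j = matComp ℓ d h i j + matComp ℓ h d i j))
    (dm dm' : ∀ i j, C i →ₗ[R] C j)
    (hdm : ∀ i j, ¬ i < j → dm i j = 0)
    (hdm' : ∀ i j, ¬ i < j → dm' i j = 0)
    (hD : (∀ i, matComp ℓ (fun a b => d a b + dm a b) (fun a b => d a b + dm a b) i i
            = F • (LinearMap.id : C i →ₗ[R] C i)) ∧
          (∀ i j, i ≠ j →
            matComp ℓ (fun a b => d a b + dm a b) (fun a b => d a b + dm a b) i j = 0))
    (hD' : (∀ i, matComp ℓ (fun a b => d a b + dm' a b) (fun a b => d a b + dm' a b) i i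
            = F • (LinearMap.id : C i →ₗ[R] C i)) ∧
          (∀ i j, i ≠ j →
            matComp ℓ (fun a b => d a b + dm' a b) (fun a b => d a b + dm' a b) i j = 0)) :
    ∃ Ψ Ψinv : ∀ i j, C i →ₗ[R] C j,
      (∀ i, Ψ i i = LinearMap.id) ∧
      (∀ i j, j < i → Ψ i j = 0) ∧
      (∀ i, matComp ℓ Ψ Ψinv i i = LinearMap.id) ∧
      (∀ i j, i ≠ j → matComp ℓ Ψ Ψinv i j = 0) ∧
      (∀ i, matComp ℓ Ψinv Ψ i i = LinearMap.id) ∧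
      (∀ i j, i ≠ j → matComp ℓ Ψinv Ψ i j = 0) ∧
      (∀ i j, matComp ℓ Ψ (fun a b => d a b + dm a b) i j
            = matComp ℓ (fun a b => d a b + dm' a b) Ψ i j) := by
  have hDD : matComp ℓ (d + dm) (d + dm) = F • matId := eq_smul_matId hD.1 hD.2
  have hDD' : matComp ℓ (d + dm') (d + dm') = F • matId := eq_smul_matId hD'.1 hD'.2
  obtain ⟨S, hS, hdefect⟩ := exists_unipotent_intertwiner_mod hC hddeg hnull
    (raisesBy_one_iff.mpr hdm) (raisesBy_one_iff.mpr hdm') hDD hDD' ℓ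
  have hcomm : matComp ℓ (matId + S) (d + dm) = matComp ℓ (d + dm') (matId + S) :=
    sub_eq_zero.mp (hdefect.eq_zero hC)
  obtain ⟨T, hΨT, hTΨ⟩ := exists_inverse_unipotent hC hS
  refine ⟨matId + S, T, fun i => ?_, fun i j hij => ?_, fun i => by rw [hΨT, matId_self],
    fun i j hij => by rw [hΨT, matId_of_ne hij], fun i => by rw [hTΨ, matId_self],
    fun i j hij => by rw [hTΨ, matId_of_ne hij], fun i j => congrFun (congrFun hcomm i) j⟩
  · simp [hS i i (by omega)]
  · simp [matId_of_ne (by omega : i ≠ j), hS i j (by omega)]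

/-- **Uniqueness lemma for matrix factorization extensions.**  Two completions
`D = d + dm` and `D̃ = d + dm'` of the same positive differential `d` to curved differentials
squaring to `F · id` are conjugate by a unipotent automorphism
`Ψ = id + (strictly index-raising part)`. -/
theorem uniqueness_lemma_matrix_factorization
    {R : Type*} [CommRing R] (F : R) (ℓ : ℕ)
    (C : ℕ → Type*) [∀ i, AddCommGroup (C i)] [∀ i, Module R (C i)]
    (hC : ∀ i, ℓ < i → Subsingleton (C i))
    (d : ∀ i j, C i →ₗ[R] C j)
    (hddeg : ∀ i j, i ≠ j + 1 → d i j = 0)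
    (hdd : ∀ i j, matComp ℓ d d i j = 0)
    (hnull : ∀ k : ℕ, 1 ≤ k → ∀ f : ∀ i j, C i →ₗ[R] C j,
      (∀ i j, j ≠ i + k → f i j = 0) →
      (∀ i j, matComp ℓ f d i j = matComp ℓ d f i j) →
      ∃ h : ∀ i j, C i →ₗ[R] C j,
        (∀ i j, j ≠ i + k + 1 → h i j = 0) ∧
        (∀ i j, f i j = matComp ℓ d h i j + matComp ℓ h d i j))
    (hF : ∃ h : ∀ i j, C i →ₗ[R] C j,
        (∀ i j, j ≠ i + 1 → h i j = 0) ∧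
        (∀ i, F • (LinearMap.id : C i →ₗ[R] C i)
            = matComp ℓ d h i i + matComp ℓ h d i i))
    (dm dm' : ∀ i j, C i →ₗ[R] C j)
    (hdm : ∀ i j, ¬ i < j → dm i j = 0)
    (hdm' : ∀ i j, ¬ i < j → dm' i j = 0)
    (hD : (∀ i, matComp ℓ (fun a b => d a b + dm a b) (fun a b => d a b + dm a b) i i
            = F • (LinearMap.id : C i →ₗ[R] C i)) ∧
          (∀ i j, i ≠ j →
            matComp ℓ (fun a b => d a b + dm a b) (fun a b => d a b + dm a b) i j = 0))
    (hD' : (∀ i, matComp ℓ (fun a b => d a b + dm' a b) (fun a b => d a b + dm' a b) i i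
            = F • (LinearMap.id : C i →ₗ[R] C i)) ∧
          (∀ i j, i ≠ j →
            matComp ℓ (fun a b => d a b + dm' a b) (fun a b => d a b + dm' a b) i j = 0)) :
    ∃ Ψ Ψinv : ∀ i j, C i →ₗ[R] C j,
      (∀ i, Ψ i i = LinearMap.id) ∧
      (∀ i j, j < i → Ψ i j = 0) ∧
      (∀ i, matComp ℓ Ψ Ψinv i i = LinearMap.id) ∧
      (∀ i j, i ≠ j → matComp ℓ Ψ Ψinv i j = 0) ∧
      (∀ i, matComp ℓ Ψinv Ψ i i = LinearMap.id) ∧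
      (∀ i j, i ≠ j → matComp ℓ Ψinv Ψ i j = 0) ∧
      (∀ i j, matComp ℓ Ψ (fun a b => d a b + dm a b) i j
            = matComp ℓ (fun a b => d a b + dm' a b) Ψ i j) :=
  uniqueness_lemma_matrix_factorization_general F ℓ C hC d hddeg hnull dm dm' hdm hdm' hD hD'
end

section
/- Let R be a commutative ring, δ : R → R a derivation, F ∈ R, and D an m×m matrix with entries in R such that D · D = F · 1 (F times the identity matrix). Let δD denote the matrix obtained by applying δ to every entry of D. Then (δD) · D + D · (δD) = (δF) · 1. In particular, multiplication by δF on the two-periodic complex defined by D is homotopic to zero, with homotopy given by δD. -/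
/-- **Partial derivatives of the potential act null-homotopically on a matrix factorization.**
If `D` is an `m × m` matrix over a commutative ring `R` with `D · D = F · 1` and `δ` is a
derivation of `R`, then `(δD) · D + D · (δD) = (δF) · 1`, where `δD` is obtained by applying
`δ` entrywise; i.e. multiplication by `δF` on the two-periodic complex defined by `D` is
homotopic to zero with homotopy `δD`. -/
theorem derivation_of_potential_null_homotopic
    {R : Type*} [CommRing R] (δ : Derivation R R R) (F : R) (m : ℕ)
    (D : Matrix (Fin m) (Fin m) R)
    (hD : D * D = F • (1 : Matrix (Fin m) (Fin m) R)) :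
    D.map (fun x => δ x) * D + D * D.map (fun x => δ x)
      = δ F • (1 : Matrix (Fin m) (Fin m) R) := by
  ext i j
  have key : (D * D) i j = (F • (1 : Matrix (Fin m) (Fin m) R)) i j := by rw [hD]
  simp only [Matrix.mul_apply, Matrix.smul_apply, Matrix.one_apply, smul_eq_mul] at key ⊢
  simp only [Matrix.add_apply, Matrix.mul_apply, Matrix.map_apply]
  rw [← Finset.sum_add_distrib]
  rw [show (∑ k, (δ (D i k) * D k j + D i k * δ (D k j))) = δ (∑ k, D i k * D k j) by
    simp only [map_sum, Derivation.leibniz, smul_eq_mul]; exact Finset.sum_congr rfl fun k _ => by ring]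
  rw [key]
  by_cases h : i = j <;> simp [h]
end

section
/- Let R be a commutative ring, n ≥ 1, and let a₁, …, aₙ ∈ R be a regular sequence. Let b, b′ ∈ Rⁿ satisfy Σᵢ aᵢbᵢ = F = Σᵢ aᵢb′ᵢ. On the exterior algebra Λ(Rⁿ) (with standard basis e₁,…,eₙ of Rⁿ) consider the odd operators D = λ_a + ι_b and D′ = λ_a + ι_{b′}, where λ_a is left exterior multiplication by a₁e₁ + … + aₙeₙ and ι_b is the odd derivation of Λ(Rⁿ) determined by ι_b(eᵢ) = bᵢ. Then D² = F·id and D′² = F·id, and there exists an R-linear automorphism Ψ of Λ(Rⁿ), preserving the ℤ/2-grading by exterior parity, such that Ψ ∘ D = D′ ∘ Ψ. In particular the Koszul matrix factorization K^F(a₁,…,aₙ) is, up to isomorphism, independent of the choice of the coefficients bᵢ with F = Σ aᵢbᵢ. -/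
/-- The Koszul differential `λ_a + ι_b` on the exterior algebra `Λ(Rⁿ)`:
left exterior multiplication by `a₁e₁ + ⋯ + aₙeₙ` plus contraction along the dual
vector `x ↦ Σ bᵢxᵢ`. -/
noncomputable def koszulD {R : Type*} [CommRing R] {n : ℕ} (a b : Fin n → R) :
    ExteriorAlgebra R (Fin n → R) →ₗ[R] ExteriorAlgebra R (Fin n → R) :=
  LinearMap.mulLeft R (ExteriorAlgebra.ι R a)
    + CliffordAlgebra.contractLeft (Q := (0 : QuadraticForm R (Fin n → R)))
        (∑ i : Fin n, b i • LinearMap.proj i)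

namespace KoszulWD

open CliffordAlgebra

variable {R : Type*} [CommRing R] {n : ℕ}

noncomputable abbrev Cv (d : Module.Dual R (Fin n → R)) :
    ExteriorAlgebra R (Fin n → R) →ₗ[R] ExteriorAlgebra R (Fin n → R) :=
  CliffordAlgebra.contractLeft (Q := (0 : QuadraticForm R (Fin n → R))) d

def dual (b : Fin n → R) : Module.Dual R (Fin n → R) :=
  ∑ i : Fin n, b i • LinearMap.proj i

lemma dual_apply (b v : Fin n → R) : dual b v = ∑ i, b i * v i := by
  simp [dual]

lemma dual_add (b b' : Fin n → R) : dual (b + b') = dual b + dual b' := by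
  apply LinearMap.ext; intro v
  simp [dual_apply, add_mul, Finset.sum_add_distrib]

lemma koszulD_eq (a b : Fin n → R) :
    koszulD a b = LinearMap.mulLeft R (ExteriorAlgebra.ι R a) + Cv (dual b) := rfl

lemma cCL (d : Module.Dual R (Fin n → R)) (a : Fin n → R)
    (x : ExteriorAlgebra R (Fin n → R)) :
    Cv d (ExteriorAlgebra.ι R a * x) = d a • x - ExteriorAlgebra.ι R a * Cv d x :=
  contractLeft_ι_mul _ _ _

lemma koszulD_sq (a b : Fin n → R) :
    (koszulD a b).comp (koszulD a b)
      = (∑ i, a i * b i) • (LinearMap.id : ExteriorAlgebra R (Fin n → R) →ₗ[R] _) := by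
  apply LinearMap.ext; intro x
  simp only [koszulD_eq, LinearMap.comp_apply, LinearMap.add_apply, LinearMap.mulLeft_apply,
    LinearMap.smul_apply, LinearMap.id_apply]
  rw [map_add, cCL, mul_add, ← mul_assoc, ExteriorAlgebra.ι_sq_zero, zero_mul,
    contractLeft_contractLeft, dual_apply]
  rw [Finset.sum_congr rfl fun i _ => mul_comm (a i) (b i)]
  abel

lemma range_pow_le_evenOdd (m : ℕ) :
    (LinearMap.range (ExteriorAlgebra.ι R (M := Fin n → R)) ^ m : Submodule R _)
      ≤ evenOdd (0 : QuadraticForm R (Fin n → R)) (m : ZMod 2) :=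
  le_iSup (fun j : {k : ℕ // (k : ZMod 2) = (m : ZMod 2)} =>
    (LinearMap.range (CliffordAlgebra.ι (0 : QuadraticForm R (Fin n → R))) ^ (j : ℕ) :
      Submodule R _)) ⟨m, rfl⟩

lemma h2 : ∀ k : ZMod 2, k + 1 + 1 = k := by decide

lemma pow_grade (d : Module.Dual R (Fin n → R)) (m : ℕ) :
    ∀ x ∈ (LinearMap.range (ExteriorAlgebra.ι R (M := Fin n → R)) ^ m : Submodule R _),
      Cv d x ∈ evenOdd (0 : QuadraticForm R (Fin n → R)) ((m : ZMod 2) + 1) := by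
  induction m with
  | zero =>
    intro x hx
    rw [pow_zero] at hx
    obtain ⟨r, rfl⟩ := Submodule.mem_one.mp hx
    rw [contractLeft_algebraMap]
    exact Submodule.zero_mem _
  | succ m ih =>
    intro x hx
    rw [pow_succ'] at hx
    induction hx using Submodule.mul_induction_on' with
    | mem_mul_mem y hy z hz =>
      obtain ⟨v, rfl⟩ := hy
      rw [show (ExteriorAlgebra.ι R) v = ExteriorAlgebra.ι R v from rfl]
      rw [cCL]
      have hz' : z ∈ evenOdd (0 : QuadraticForm R (Fin n → R)) ((m : ZMod 2)) :=
        range_pow_le_evenOdd m hz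
      have h1 : d v • z ∈ evenOdd (0 : QuadraticForm R (Fin n → R)) ((m : ZMod 2)) :=
        Submodule.smul_mem _ _ hz'
      have h3 : ExteriorAlgebra.ι R v * Cv d z
          ∈ evenOdd (0 : QuadraticForm R (Fin n → R)) (1 + ((m : ZMod 2) + 1)) :=
        SetLike.mul_mem_graded (ι_mem_evenOdd_one _ v) (ih z hz)
      have e1 : ((m + 1 : ℕ) : ZMod 2) + 1 = (m : ZMod 2) := by push_cast; rw [h2]
      have e2 : (1 : ZMod 2) + ((m : ZMod 2) + 1) = (m : ZMod 2) := by
        rw [add_comm (1 : ZMod 2), h2]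
      rw [e1]
      exact Submodule.sub_mem _ h1 (e2 ▸ h3)
    | add y hy z hz hy' hz' => rw [map_add]; exact Submodule.add_mem _ hy' hz'

lemma contr_grade (d : Module.Dual R (Fin n → R)) (k : ZMod 2) :
    ∀ x ∈ evenOdd (0 : QuadraticForm R (Fin n → R)) k,
      Cv d x ∈ evenOdd (0 : QuadraticForm R (Fin n → R)) (k + 1) := by
  intro x hx
  refine evenOdd_induction _ k (motive := fun x _ =>
      Cv d x ∈ evenOdd (0 : QuadraticForm R (Fin n → R)) (k + 1)) ?_ ?_ ?_ x hx
  · intro v hv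
    have := pow_grade d k.val v hv
    rwa [ZMod.natCast_zmod_val] at this
  · intro x y hx hy hx' hy'
    rw [map_add]; exact Submodule.add_mem _ hx' hy'
  · intro m₁ m₂ x hx hx'
    rw [mul_assoc, cCL, cCL, mul_sub]
    have t1 : d m₁ • (CliffordAlgebra.ι _ m₂ * x)
        ∈ evenOdd (0 : QuadraticForm R (Fin n → R)) (1 + k) :=
      Submodule.smul_mem _ _ (SetLike.mul_mem_graded (ι_mem_evenOdd_one _ m₂) hx)
    have t2 : CliffordAlgebra.ι _ m₁ * (d m₂ • x)
        ∈ evenOdd (0 : QuadraticForm R (Fin n → R)) (1 + k) :=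
      SetLike.mul_mem_graded (ι_mem_evenOdd_one _ m₁) (Submodule.smul_mem _ _ hx)
    have t3 : CliffordAlgebra.ι _ m₁ * (CliffordAlgebra.ι _ m₂ * Cv d x)
        ∈ evenOdd (0 : QuadraticForm R (Fin n → R)) (1 + (1 + (k + 1))) :=
      SetLike.mul_mem_graded (ι_mem_evenOdd_one _ m₁)
        (SetLike.mul_mem_graded (ι_mem_evenOdd_one _ m₂) hx')
    have e1 : (1 : ZMod 2) + k = k + 1 := add_comm _ _
    have e3 : ∀ k : ZMod 2, (1 : ZMod 2) + (1 + (k + 1)) = k + 1 := by decide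
    exact Submodule.sub_mem _ (e1 ▸ t1) (Submodule.sub_mem _ (e1 ▸ t2) (e3 k ▸ t3))

lemma cswap (d d' : Module.Dual R (Fin n → R)) (x : ExteriorAlgebra R (Fin n → R)) :
    Cv d (Cv d' x) = -(Cv d' (Cv d x)) :=
  contractLeft_comm d d' x

lemma cself (d : Module.Dual R (Fin n → R)) (x : ExteriorAlgebra R (Fin n → R)) :
    Cv d (Cv d x) = 0 :=
  contractLeft_contractLeft d x

def row (a : Fin n → R) (i₀ : Fin n) (d : Fin n → R) : Fin n → R :=
  fun k => if k = i₀ then ∑ j, d j * a j else -(d k * a i₀)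

lemma dual_row (a d : Fin n → R) (i₀ : Fin n) (hd : d i₀ = 0) :
    dual (row a i₀ d) = (∑ j, d j * a j) • LinearMap.proj i₀ - a i₀ • dual d := by
  apply LinearMap.ext; intro v
  simp only [dual_apply, LinearMap.sub_apply, LinearMap.smul_apply, LinearMap.proj_apply,
    smul_eq_mul]
  calc ∑ k, row a i₀ d k * v k
      = ∑ k, ((if k = i₀ then (∑ j, d j * a j) * v k else 0) - d k * a i₀ * v k) := by
        refine Finset.sum_congr rfl fun k _ => ?_
        simp only [row]
        split_ifs with h
        · subst h; rw [hd]; ring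
        · ring
    _ = (∑ j, d j * a j) * v i₀ - a i₀ * ∑ k, d k * v k := by
        rw [Finset.sum_sub_distrib,
          Finset.sum_ite_eq' Finset.univ i₀ (fun k => (∑ j, d j * a j) * v k),
          if_pos (Finset.mem_univ _), Finset.mul_sum]
        congr 1
        exact Finset.sum_congr rfl fun k _ => by ring

/-- The equivalence relation: existence of a grading-preserving intertwiner. -/
def Rel (a b b' : Fin n → R) : Prop :=
  ∃ Ψ : ExteriorAlgebra R (Fin n → R) ≃ₗ[R] ExteriorAlgebra R (Fin n → R),
    (∀ k : ZMod 2, ∀ x ∈ evenOdd (0 : QuadraticForm R (Fin n → R)) k,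
      Ψ x ∈ evenOdd (0 : QuadraticForm R (Fin n → R)) k) ∧
    Ψ.toLinearMap.comp (koszulD a b) = (koszulD a b').comp Ψ.toLinearMap

lemma Rel.refl (a b : Fin n → R) : Rel a b b :=
  ⟨LinearEquiv.refl R _, fun _ _ hx => hx, by ext x; rfl⟩

lemma Rel.trans {a b b' b'' : Fin n → R} (h1 : Rel a b b') (h2 : Rel a b' b'') :
    Rel a b b'' := by
  obtain ⟨Ψ₁, hg1, hc1⟩ := h1
  obtain ⟨Ψ₂, hg2, hc2⟩ := h2
  refine ⟨Ψ₁.trans Ψ₂, fun k x hx => hg2 k _ (hg1 k x hx), ?_⟩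
  apply LinearMap.ext; intro x
  have e1 := LinearMap.congr_fun hc1 x
  have e2 := LinearMap.congr_fun hc2 (Ψ₁ x)
  simp only [LinearMap.comp_apply, LinearEquiv.coe_coe] at e1 e2 ⊢
  simp only [LinearEquiv.trans_apply]
  rw [e1, e2]

lemma row_rel (a b d : Fin n → R) (i₀ : Fin n) (hd : d i₀ = 0) :
    Rel a b (b + row a i₀ d) := by
  set τ : Module.Dual R (Fin n → R) := dual d with hτ
  set P : Module.Dual R (Fin n → R) := LinearMap.proj i₀ with hP
  set N : ExteriorAlgebra R (Fin n → R) →ₗ[R] ExteriorAlgebra R (Fin n → R) :=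
    (Cv P).comp (Cv τ) with hN
  have hNx : ∀ x, N x = Cv P (Cv τ x) := fun x => rfl
  have hN2 : ∀ x, N (N x) = 0 := by
    intro x
    rw [hNx, hNx, cswap τ P (Cv τ x), cself]
    simp
  have hinv1 : (LinearMap.id + N).comp (LinearMap.id - N) = LinearMap.id := by
    apply LinearMap.ext; intro x
    simp only [LinearMap.comp_apply, LinearMap.add_apply, LinearMap.sub_apply,
      LinearMap.id_apply, map_sub]
    rw [hN2]; abel
  have hinv2 : (LinearMap.id - N).comp (LinearMap.id + N) = LinearMap.id := by
    apply LinearMap.ext; intro x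
    simp only [LinearMap.comp_apply, LinearMap.add_apply, LinearMap.sub_apply,
      LinearMap.id_apply, map_add]
    rw [hN2]; abel
  refine ⟨LinearEquiv.ofLinear (LinearMap.id + N) (LinearMap.id - N) hinv1 hinv2, ?_, ?_⟩
  · intro k x hx
    simp only [LinearEquiv.ofLinear_apply, LinearMap.add_apply, LinearMap.id_apply]
    refine Submodule.add_mem _ hx ?_
    rw [hNx]
    have h3 := contr_grade P (k + 1) _ (contr_grade τ k x hx)
    rwa [h2 k] at h3
  · apply LinearMap.ext; intro x
    simp only [LinearMap.comp_apply, LinearEquiv.coe_coe, LinearEquiv.ofLinear_apply,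
      LinearMap.add_apply, LinearMap.id_apply]
    -- expand koszulD
    have hD : ∀ y, koszulD a b y = ExteriorAlgebra.ι R a * y + Cv (dual b) y := fun y => rfl
    have hD' : ∀ y, koszulD a (b + row a i₀ d) y
        = ExteriorAlgebra.ι R a * y + Cv (dual b) y + Cv (dual (row a i₀ d)) y := by
      intro y
      have hadd : Cv (dual b + dual (row a i₀ d))
          = Cv (dual b) + Cv (dual (row a i₀ d)) := map_add _ _ _
      rw [koszulD_eq, dual_add, hadd]
      simp only [LinearMap.add_apply, LinearMap.mulLeft_apply]
      abel
    rw [hD, hD' (x + N x)]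
    -- compute N (ι a * x)
    have hNL : N (ExteriorAlgebra.ι R a * x)
        = τ a • Cv P x - a i₀ • Cv τ x + ExteriorAlgebra.ι R a * N x := by
      rw [hNx, cCL, map_sub, LinearMap.map_smul, cCL, ← hNx x]
      rw [show P a = a i₀ from rfl]
      abel
    -- N commutes with Cv (dual b)
    have hNC : N (Cv (dual b) x) = Cv (dual b) (N x) := by
      rw [hNx, hNx, cswap τ (dual b) x, map_neg, cswap P (dual b) (Cv τ x), neg_neg]
    -- the correction term
    have hG : ∀ y, Cv (dual (row a i₀ d)) y = τ a • Cv P y - a i₀ • Cv τ y := by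
      intro y
      have h1 : Cv ((∑ j, d j * a j) • P - a i₀ • τ)
          = Cv ((∑ j, d j * a j) • P) - Cv (a i₀ • τ) := map_sub _ _ _
      have h2' : Cv ((∑ j, d j * a j) • P) = (∑ j, d j * a j) • Cv P := map_smul _ _ _
      have h3' : Cv (a i₀ • τ) = a i₀ • Cv τ := map_smul _ _ _
      rw [dual_row a d i₀ hd, ← hτ, ← hP, h1, h2', h3']
      simp only [LinearMap.sub_apply, LinearMap.smul_apply]
      congr 1
      rw [hτ, dual_apply]
    have hGN : Cv (dual (row a i₀ d)) (N x) = 0 := by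
      rw [hG, hNx, cself, cswap τ P (Cv τ x), cself, map_zero, neg_zero, smul_zero,
        smul_zero, sub_zero]
    rw [map_add N, hNL, hNC, mul_add, map_add (Cv (dual b)),
      map_add (Cv (dual (row a i₀ d))), hGN, hG x]
    abel

lemma rel_of_reg (a : Fin n → R)
    (hreg : ∀ i : Fin n, ∀ x : R,
      a i * x ∈ Ideal.span (a '' {j : Fin n | j < i}) →
        x ∈ Ideal.span (a '' {j : Fin n | j < i})) :
    ∀ k : ℕ, ∀ c : Fin n → R, (∀ i : Fin n, k ≤ (i : ℕ) → c i = 0) →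
      (∑ i, a i * c i = 0) → ∀ b, Rel a b (b + c) := by
  intro k
  induction k with
  | zero =>
    intro c hc _ b
    have : c = 0 := funext fun i => hc i (Nat.zero_le _)
    rw [this, add_zero]
    exact Rel.refl a b
  | succ k ih =>
    intro c hc hsum b
    by_cases hk : k < n
    · set i₀ : Fin n := ⟨k, hk⟩ with hi₀
      -- a i₀ * c i₀ lies in the span of the earlier aᵢ
      have hspan : a i₀ * c i₀ ∈ Ideal.span (a '' {j : Fin n | j < i₀}) := by
        have hdecomp : a i₀ * c i₀ = ∑ i ∈ Finset.univ.erase i₀, -(a i * c i) := by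
          have h := Finset.add_sum_erase Finset.univ (fun i => a i * c i)
            (Finset.mem_univ i₀)
          rw [hsum] at h
          rw [Finset.sum_neg_distrib]
          exact eq_neg_of_add_eq_zero_left h
        rw [hdecomp]
        refine Ideal.sum_mem _ fun i hi => ?_
        have hne : i ≠ i₀ := (Finset.mem_erase.mp hi).1
        rcases lt_or_ge i i₀ with hlt | hge
        · refine neg_mem (Ideal.mul_mem_right _ _ (Ideal.subset_span ?_))
          exact ⟨i, hlt, rfl⟩
        · have h3 : i₀ < i := lt_of_le_of_ne hge (Ne.symm hne)
          have h4 : k < (i : ℕ) := h3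
          have h5 : c i = 0 := hc i (by omega)
          rw [h5, mul_zero, neg_zero]
          exact Submodule.zero_mem _
      have hci₀ := hreg i₀ (c i₀) hspan
      -- extract coefficients
      set a' : Fin n → R := fun j => if j < i₀ then a j else 0 with ha'
      have hle : Ideal.span (a '' {j : Fin n | j < i₀}) ≤ Ideal.span (Set.range a') := by
        apply Ideal.span_mono
        rintro x ⟨j, hj, rfl⟩
        exact ⟨j, by show (if j < i₀ then a j else 0) = a j; exact if_pos hj⟩
      obtain ⟨g, hg⟩ := Ideal.mem_span_range_iff_exists_fun.mp (hle hci₀)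
      set d : Fin n → R := fun j => if j < i₀ then g j else 0 with hdd
      have hdi₀ : d i₀ = 0 := by
        show (if i₀ < i₀ then g i₀ else 0) = 0
        rw [if_neg (lt_irrefl i₀)]
      have hdsupp : ∀ j : Fin n, ¬ j < i₀ → d j = 0 := fun j hj => by
        show (if j < i₀ then g j else 0) = 0
        rw [if_neg hj]
      have hdsum : ∑ j, d j * a j = c i₀ := by
        rw [← hg]
        refine Finset.sum_congr rfl fun j _ => ?_
        simp only [hdd, ha']
        split_ifs with h
        · ring
        · ring
      set c' : Fin n → R := c - row a i₀ d with hc'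
      have hrowval : ∀ i : Fin n, row a i₀ d i
          = if i = i₀ then ∑ j, d j * a j else -(d i * a i₀) := fun i => rfl
      have hc'supp : ∀ i : Fin n, k ≤ (i : ℕ) → c' i = 0 := by
        intro i hki
        simp only [hc', Pi.sub_apply, hrowval]
        by_cases h : i = i₀
        · subst h
          rw [if_pos rfl, hdsum, sub_self]
        · have hival : (i₀ : ℕ) < (i : ℕ) := by
            have hne : (i : ℕ) ≠ k := fun hh => h (Fin.ext hh)
            have hkv : (i₀ : ℕ) = k := rfl
            omega
          rw [if_neg h, hc i hival, hdsupp i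
            (fun hlt => absurd hival (not_lt.mpr (Nat.le_of_lt hlt))),
            zero_mul, neg_zero, sub_zero]
      have hc'sum : ∑ i, a i * c' i = 0 := by
        have hrsum : ∑ i, a i * row a i₀ d i = 0 := by
          have e1 : ∀ i ∈ Finset.univ, a i * row a i₀ d i
              = (if i = i₀ then a i₀ * (∑ j, d j * a j) + a i₀ * (d i * a i) else 0)
                - a i₀ * (d i * a i) := by
            intro i _
            rw [hrowval i]
            split_ifs with h
            · subst h; ring
            · ring
          rw [Finset.sum_congr rfl e1, Finset.sum_sub_distrib,
            Finset.sum_ite_eq' Finset.univ i₀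
              (fun i => a i₀ * (∑ j, d j * a j) + a i₀ * (d i * a i)),
            if_pos (Finset.mem_univ _), ← Finset.mul_sum, hdi₀]
          ring
        simp only [hc', Pi.sub_apply, mul_sub]
        rw [Finset.sum_sub_distrib, hsum, hrsum, sub_zero]
      have step1 : Rel a b (b + row a i₀ d) := row_rel a b d i₀ hdi₀
      have step2 : Rel a (b + row a i₀ d) (b + row a i₀ d + c') :=
        ih c' hc'supp hc'sum (b + row a i₀ d)
      have : b + row a i₀ d + c' = b + c := by
        simp only [hc']
        abel
      rw [this] at step2
      exact step1.trans step2
    · refine ih c (fun i hi => absurd hi ?_) hsum b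
      have := i.isLt
      omega

end KoszulWD

/-- **Well-definedness of the Koszul matrix factorization `K^F(a₁,…,aₙ)`.**
If `a₁,…,aₙ` is a regular sequence and `Σ aᵢbᵢ = F = Σ aᵢb′ᵢ`, then both `D = λ_a + ι_b`
and `D′ = λ_a + ι_{b′}` square to `F · id`, and there is an `R`-linear automorphism `Ψ` of
`Λ(Rⁿ)` preserving the ℤ/2-grading by exterior parity with `Ψ ∘ D = D′ ∘ Ψ`.  Hence the
Koszul matrix factorization is independent of the choice of the coefficients `bᵢ`. -/
theorem koszul_matrix_factorization_well_defined
    {R : Type*} [CommRing R] {n : ℕ} (hn : 1 ≤ n) (F : R) (a b b' : Fin n → R)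
    (hreg : ∀ i : Fin n, ∀ x : R,
      a i * x ∈ Ideal.span (a '' {j : Fin n | j < i}) →
        x ∈ Ideal.span (a '' {j : Fin n | j < i}))
    (hreg' : Ideal.span (Set.range a) ≠ ⊤)
    (hb : ∑ i : Fin n, a i * b i = F) (hb' : ∑ i : Fin n, a i * b' i = F) :
    (koszulD a b).comp (koszulD a b)
        = F • (LinearMap.id : ExteriorAlgebra R (Fin n → R) →ₗ[R] _) ∧
    (koszulD a b').comp (koszulD a b')
        = F • (LinearMap.id : ExteriorAlgebra R (Fin n → R) →ₗ[R] _) ∧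
    ∃ Ψ : ExteriorAlgebra R (Fin n → R) ≃ₗ[R] ExteriorAlgebra R (Fin n → R),
      (∀ k : ZMod 2, ∀ x ∈ CliffordAlgebra.evenOdd (0 : QuadraticForm R (Fin n → R)) k,
        Ψ x ∈ CliffordAlgebra.evenOdd (0 : QuadraticForm R (Fin n → R)) k) ∧
      Ψ.toLinearMap.comp (koszulD a b) = (koszulD a b').comp Ψ.toLinearMap := by
  obtain ⟨Ψ, hg, hcomm⟩ := KoszulWD.rel_of_reg a hreg n (b' - b)
    (fun i hi => absurd hi (Nat.not_le.mpr i.isLt))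
    (by
      have h1 : ∑ i, a i * (b' - b) i = ∑ i, (a i * b' i - a i * b i) :=
        Finset.sum_congr rfl fun i _ => by rw [Pi.sub_apply]; ring
      rw [h1, Finset.sum_sub_distrib, hb, hb', sub_self]) b
  have hbb : b + (b' - b) = b' := by abel
  rw [hbb] at hcomm
  refine ⟨?_, ?_, Ψ, hg, hcomm⟩
  · rw [KoszulWD.koszulD_sq, hb]
  · rw [KoszulWD.koszulD_sq, hb']
end

section
/- Let K be a commutative ring and n ≥ 1. Let X be an n×n matrix over K, let g₁, g₂ be invertible n×n matrices over K, and let Y₁, Y₂ be strictly upper-triangular n×n matrices. Set A = g₁⁻¹Xg₁, g₁₂ = g₁⁻¹g₂ and B = g₁₂Y₂g₁₂⁻¹. Then Tr(X·(g₁Y₁g₁⁻¹ − g₂Y₂g₂⁻¹)) = Tr(A₋₋ · (Y₁ − B₊₊)) − Tr(A₊ · B). In particular the potential W(X,g₁,Y₁,g₂,Y₂) = Tr(X(Ad_{g₁}(Y₁) − Ad_{g₂}(Y₂))) splits into a term depending only on (A₊, g₁₂, Y₂) and a term which is bilinear in the entries of A₋₋ and of Y₁ − B₊₊. -/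
/-- The upper-triangular part `M₊` of a square matrix. -/
def upperPart {K : Type*} [Zero K] {n : ℕ} (M : Matrix (Fin n) (Fin n) K) :
    Matrix (Fin n) (Fin n) K :=
  fun i j => if i ≤ j then M i j else 0

/-- The strictly upper-triangular part `M₊₊` of a square matrix. -/
def strictUpperPart {K : Type*} [Zero K] {n : ℕ} (M : Matrix (Fin n) (Fin n) K) :
    Matrix (Fin n) (Fin n) K :=
  fun i j => if i < j then M i j else 0

/-- The strictly lower-triangular part `M₋₋ = M − M₊` of a square matrix. -/
def strictLowerPart {K : Type*} [Zero K] {n : ℕ} (M : Matrix (Fin n) (Fin n) K) :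
    Matrix (Fin n) (Fin n) K :=
  fun i j => if j < i then M i j else 0

lemma trace_strictUpper_right {K : Type*} [CommRing K] {n : ℕ}
    (A Y : Matrix (Fin n) (Fin n) K) (hY : ∀ i j, j ≤ i → Y i j = 0) :
    (A * Y).trace = (strictLowerPart A * Y).trace := by
  simp only [Matrix.trace, Matrix.diag, Matrix.mul_apply]
  refine Finset.sum_congr rfl fun i _ => Finset.sum_congr rfl fun j _ => ?_
  by_cases h : j < i
  · simp [strictLowerPart, h]
  · simp [strictLowerPart, h, hY j i (le_of_not_gt h)]

lemma trace_strictLower_strictUpper {K : Type*} [CommRing K] {n : ℕ}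
    (A B : Matrix (Fin n) (Fin n) K) :
    (strictLowerPart A * B).trace = (strictLowerPart A * strictUpperPart B).trace := by
  simp only [Matrix.trace, Matrix.diag, Matrix.mul_apply]
  refine Finset.sum_congr rfl fun i _ => Finset.sum_congr rfl fun j _ => ?_
  by_cases h : j < i
  · simp [strictLowerPart, strictUpperPart, h]
  · simp [strictLowerPart, h]

lemma upper_add_strictLower {K : Type*} [CommRing K] {n : ℕ}
    (A : Matrix (Fin n) (Fin n) K) :
    upperPart A + strictLowerPart A = A := by
  ext i j
  by_cases h : i ≤ j
  · simp [upperPart, strictLowerPart, h, not_lt.mpr h, Matrix.add_apply]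
  · simp [upperPart, strictLowerPart, h, lt_of_not_ge h, Matrix.add_apply]

/-- **The Knörrer-reduction identity for the potential.**  With `A = g₁⁻¹Xg₁`,
`g₁₂ = g₁⁻¹g₂` and `B = g₁₂Y₂g₁₂⁻¹`, and `Y₁, Y₂` strictly upper-triangular,
`Tr(X·(g₁Y₁g₁⁻¹ − g₂Y₂g₂⁻¹)) = Tr(A₋₋·(Y₁ − B₊₊)) − Tr(A₊·B)`. -/
theorem knorrer_potential_identity
    {K : Type*} [CommRing K] {n : ℕ} (hn : 1 ≤ n)
    (X : Matrix (Fin n) (Fin n) K) (g₁ g₂ : (Matrix (Fin n) (Fin n) K)ˣ)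
    (Y₁ Y₂ : Matrix (Fin n) (Fin n) K)
    (hY₁ : ∀ i j, j ≤ i → Y₁ i j = 0) (hY₂ : ∀ i j, j ≤ i → Y₂ i j = 0) :
    Matrix.trace (X * ((g₁ : Matrix (Fin n) (Fin n) K) * Y₁ * (↑g₁⁻¹ : Matrix (Fin n) (Fin n) K)
        - (g₂ : Matrix (Fin n) (Fin n) K) * Y₂ * (↑g₂⁻¹ : Matrix (Fin n) (Fin n) K)))
      = Matrix.trace
          (strictLowerPart ((↑g₁⁻¹ : Matrix (Fin n) (Fin n) K) * X * (g₁ : Matrix (Fin n) (Fin n) K))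
            * (Y₁ - strictUpperPart ((↑(g₁⁻¹ * g₂) : Matrix (Fin n) (Fin n) K) * Y₂
                * (↑(g₁⁻¹ * g₂)⁻¹ : Matrix (Fin n) (Fin n) K))))
        - Matrix.trace
            (upperPart ((↑g₁⁻¹ : Matrix (Fin n) (Fin n) K) * X * (g₁ : Matrix (Fin n) (Fin n) K))
              * ((↑(g₁⁻¹ * g₂) : Matrix (Fin n) (Fin n) K) * Y₂
                * (↑(g₁⁻¹ * g₂)⁻¹ : Matrix (Fin n) (Fin n) K))) := by
  set A : Matrix (Fin n) (Fin n) K :=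
    (↑g₁⁻¹ : Matrix (Fin n) (Fin n) K) * X * (g₁ : Matrix (Fin n) (Fin n) K) with hA
  set B : Matrix (Fin n) (Fin n) K :=
    (↑(g₁⁻¹ * g₂) : Matrix (Fin n) (Fin n) K) * Y₂
      * (↑(g₁⁻¹ * g₂)⁻¹ : Matrix (Fin n) (Fin n) K) with hB
  have e1 : ∀ Z : Matrix (Fin n) (Fin n) K,
      (g₁ : Matrix (Fin n) (Fin n) K) * ((↑g₁⁻¹ : Matrix (Fin n) (Fin n) K) * Z) = Z := by
    intro Z; rw [← Matrix.mul_assoc, g₁.mul_inv, Matrix.one_mul]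
  have e2 : (↑g₁⁻¹ : Matrix (Fin n) (Fin n) K) * (g₁ : Matrix (Fin n) (Fin n) K) = 1 :=
    g₁.inv_mul
  have h1 : Matrix.trace (X * ((g₁ : Matrix (Fin n) (Fin n) K) * Y₁
      * (↑g₁⁻¹ : Matrix (Fin n) (Fin n) K))) = (A * Y₁).trace := by
    have key : A * Y₁ = (↑g₁⁻¹ : Matrix (Fin n) (Fin n) K)
        * (X * ((g₁ : Matrix (Fin n) (Fin n) K) * Y₁ * (↑g₁⁻¹ : Matrix (Fin n) (Fin n) K)))
        * (g₁ : Matrix (Fin n) (Fin n) K) := by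
      simp only [hA, Matrix.mul_assoc, e1, e2, Matrix.mul_one]
    rw [key, Matrix.trace_units_conj']
  have h2 : Matrix.trace (X * ((g₂ : Matrix (Fin n) (Fin n) K) * Y₂
      * (↑g₂⁻¹ : Matrix (Fin n) (Fin n) K))) = (A * B).trace := by
    have key : A * B = (↑g₁⁻¹ : Matrix (Fin n) (Fin n) K)
        * (X * ((g₂ : Matrix (Fin n) (Fin n) K) * Y₂ * (↑g₂⁻¹ : Matrix (Fin n) (Fin n) K)))
        * (g₁ : Matrix (Fin n) (Fin n) K) := by
      simp only [hA, hB, mul_inv_rev, inv_inv, Units.val_mul, Matrix.mul_assoc, e1, e2,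
        Matrix.mul_one]
    rw [key, Matrix.trace_units_conj']
  rw [Matrix.mul_sub, Matrix.trace_sub, h1, h2,
    trace_strictUpper_right A Y₁ hY₁,
    show A * B = (upperPart A + strictLowerPart A) * B by rw [upper_add_strictLower],
    Matrix.add_mul, Matrix.trace_add, trace_strictLower_strictUpper A B,
    Matrix.mul_sub, Matrix.trace_sub]
  simp only [hA]
  ring
end

section
/- Let K be a field, n ≥ 1, let X be an upper-triangular n×n matrix over K, Y a strictly upper-triangular n×n matrix over K, and g₁₂, g₂₃ invertible n×n matrices over K. Then Tr(X · g₁₂ · ((g₂₃ Y g₂₃⁻¹)₊₊) · g₁₂⁻¹) + Tr((g₁₂⁻¹ X g₁₂)₊ · (g₂₃ Y g₂₃⁻¹)) = Tr(X · (g₁₂g₂₃) · Y · (g₁₂g₂₃)⁻¹). In the notation of the paper: π̄₁₂*(W̄) + π̄₂₃*(W̄) = π̄₁₃*(W̄), where W̄(X,g,Y) = Tr(X·Ad_g(Y)). -/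
lemma trace_split {K : Type*} [Field K] {n : ℕ} (A Z : Matrix (Fin n) (Fin n) K) :
    Matrix.trace (A * strictUpperPart Z) + Matrix.trace (upperPart A * Z)
      = Matrix.trace (A * Z) := by
  simp only [Matrix.trace, Matrix.diag, Matrix.mul_apply, upperPart, strictUpperPart]
  rw [← Finset.sum_add_distrib]
  refine Finset.sum_congr rfl fun i _ => ?_
  rw [← Finset.sum_add_distrib]
  refine Finset.sum_congr rfl fun j _ => ?_
  rcases lt_or_ge j i with h | h
  · simp [h, not_le.mpr h]
  · simp [h, not_lt.mpr h]

/-- **Additivity of the reduced potential under the convolution projections:**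
for `X` upper triangular, `Y` strictly upper triangular and `g₁₂, g₂₃` invertible,
`π̄₁₂*(W̄) + π̄₂₃*(W̄) = π̄₁₃*(W̄)`, i.e.
`Tr(X·g₁₂·(Ad_{g₂₃}Y)₊₊·g₁₂⁻¹) + Tr((Ad_{g₁₂}⁻¹X)₊ · Ad_{g₂₃}Y) = Tr(X·Ad_{g₁₂g₂₃}Y)`. -/
theorem reduced_potential_additive
    {K : Type*} [Field K] {n : ℕ} (hn : 1 ≤ n)
    (X Y : Matrix (Fin n) (Fin n) K)
    (hX : ∀ i j, j < i → X i j = 0) (hY : ∀ i j, j ≤ i → Y i j = 0)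
    (g₁₂ g₂₃ : (Matrix (Fin n) (Fin n) K)ˣ) :
    Matrix.trace (X * ((g₁₂ : Matrix (Fin n) (Fin n) K)
          * strictUpperPart ((g₂₃ : Matrix (Fin n) (Fin n) K) * Y
              * (↑g₂₃⁻¹ : Matrix (Fin n) (Fin n) K))
          * (↑g₁₂⁻¹ : Matrix (Fin n) (Fin n) K)))
      + Matrix.trace (upperPart ((↑g₁₂⁻¹ : Matrix (Fin n) (Fin n) K) * X
            * (g₁₂ : Matrix (Fin n) (Fin n) K))
          * ((g₂₃ : Matrix (Fin n) (Fin n) K) * Y * (↑g₂₃⁻¹ : Matrix (Fin n) (Fin n) K)))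
      = Matrix.trace (X * ((↑(g₁₂ * g₂₃) : Matrix (Fin n) (Fin n) K) * Y
          * (↑(g₁₂ * g₂₃)⁻¹ : Matrix (Fin n) (Fin n) K))) := by
  set g := (g₁₂ : Matrix (Fin n) (Fin n) K)
  set gi := (↑g₁₂⁻¹ : Matrix (Fin n) (Fin n) K)
  set Z := (g₂₃ : Matrix (Fin n) (Fin n) K) * Y * (↑g₂₃⁻¹ : Matrix (Fin n) (Fin n) K)
  have h1 : X * (g * strictUpperPart Z * gi) = X * g * strictUpperPart Z * gi := by
    simp [Matrix.mul_assoc]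
  have h2 : Matrix.trace (X * g * strictUpperPart Z * gi)
      = Matrix.trace (gi * X * g * strictUpperPart Z) := by
    rw [Matrix.trace_mul_comm]; simp [Matrix.mul_assoc]
  have h3 : X * ((↑(g₁₂ * g₂₃) : Matrix (Fin n) (Fin n) K) * Y
        * (↑(g₁₂ * g₂₃)⁻¹ : Matrix (Fin n) (Fin n) K))
      = X * g * ((g₂₃ : Matrix (Fin n) (Fin n) K) * Y
        * (↑g₂₃⁻¹ : Matrix (Fin n) (Fin n) K)) * gi := by
    simp [Units.val_mul, mul_inv_rev, g, gi, Matrix.mul_assoc]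
  rw [h1, h2, h3]
  rw [show Matrix.trace (X * g * Z * gi) = Matrix.trace (gi * X * g * Z) by
    rw [Matrix.trace_mul_comm]; simp [Matrix.mul_assoc]]
  exact trace_split (gi * X * g) Z
end

section
/- Fix n ≥ 1 and ℓ ≥ 2. Let E = Mₙ(ℂ) × (Mₙ(ℂ) × 𝔫ₙ)^ℓ, where 𝔫ₙ is the space of strictly upper-triangular n×n complex matrices, and let U ⊆ E be the open set of points (X, g₁, Y₁, …, g_ℓ, Y_ℓ) with every gⱼ invertible. For 1 ≤ i ≤ ℓ−1 define W_{i,i+1} : U → ℂ by W_{i,i+1}(X, g₁, Y₁, …, g_ℓ, Y_ℓ) = Tr(X · (gᵢYᵢgᵢ⁻¹ − gᵢ₊₁Yᵢ₊₁gᵢ₊₁⁻¹)). Then for a point p ∈ U the (complex) Fréchet derivatives of all the functions W_{i,i+1} (1 ≤ i ≤ ℓ−1) vanish simultaneously at p if and only if: (a) gᵢYᵢgᵢ⁻¹ = gᵢ₊₁Yᵢ₊₁gᵢ₊₁⁻¹ for all 1 ≤ i ≤ ℓ−1; (b) (gᵢ⁻¹Xgᵢ)₋₋ = 0 for all 1 ≤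 i ≤ ℓ; and (c) [X, g₁Y₁g₁⁻¹] = 0. -/
/-! Write `Aⱼ = gⱼYⱼgⱼ⁻¹`. Differentiating `W_{i,i+1}` in the direction `(ξ, (hⱼ, ηⱼ)ⱼ)` and
using cyclicity of the trace gives `Tr(ξ (Aᵢ - Aᵢ₊₁)) + τᵢ - τᵢ₊₁` with
`τⱼ = Tr([Aⱼ, X] hⱼgⱼ⁻¹) + Tr((gⱼ⁻¹Xgⱼ) ηⱼ)`. The three kinds of directions are independent, the
trace form is nondegenerate, and under it `𝔫ₙ` pairs exactly with the strictly lower-triangular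
part. So the derivative vanishes iff `Aᵢ = Aᵢ₊₁`, `[Aⱼ, X] = 0` and `(gⱼ⁻¹Xgⱼ)₋₋ = 0` for the two
slots `j` involved; every slot is involved in some `W_{i,i+1}`, and once all `Aⱼ` agree the
commutator conditions collapse to `[X, A₁] = 0`. -/

attribute [local instance] Matrix.normedAddCommGroup Matrix.normedSpace

noncomputable section

/-- The space `𝔫ₙ` of strictly upper-triangular `n × n` complex matrices, as a submodule
of the space of all matrices. -/
def strictUpperSub (n : ℕ) : Submodule ℂ (Matrix (Fin n) (Fin n) ℂ) where
  carrier := {Y | ∀ i j, j ≤ i → Y i j = 0}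
  add_mem' := by
    intro a b ha hb i j h
    show a i j + b i j = 0
    rw [ha i j h, hb i j h, add_zero]
  zero_mem' := fun _ _ _ => rfl
  smul_mem' := by
    intro c a ha i j h
    show c * a i j = 0
    rw [ha i j h, mul_zero]

/-- The ambient space `E = Mₙ(ℂ) × (Mₙ(ℂ) × 𝔫ₙ)^ℓ` (with `ℓ = ℓ' + 2`). -/
def braidSpace (n ℓ' : ℕ) : Type :=
  Matrix (Fin n) (Fin n) ℂ ×
    (Fin (ℓ' + 2) → Matrix (Fin n) (Fin n) ℂ × (strictUpperSub n))

instance (n ℓ' : ℕ) : NormedAddCommGroup (braidSpace n ℓ') := by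
  unfold braidSpace; infer_instance

instance (n ℓ' : ℕ) : NormedSpace ℂ (braidSpace n ℓ') := by
  unfold braidSpace; infer_instance

/-- The intermediate potential
`W_{i,i+1}(X, g₁, Y₁, …) = Tr(X·(gᵢYᵢgᵢ⁻¹ − gᵢ₊₁Yᵢ₊₁gᵢ₊₁⁻¹))`. -/
def braidPotential (n ℓ' : ℕ) (i : Fin (ℓ' + 1)) (p : braidSpace n ℓ') : ℂ :=
  Matrix.trace (p.1 *
    ((p.2 i.castSucc).1 * ((p.2 i.castSucc).2 : Matrix (Fin n) (Fin n) ℂ) * ((p.2 i.castSucc).1)⁻¹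
      - (p.2 i.succ).1 * ((p.2 i.succ).2 : Matrix (Fin n) (Fin n) ℂ) * ((p.2 i.succ).1)⁻¹))

open Matrix

section MatrixCalculus

variable {𝕜 : Type*} [NontriviallyNormedField 𝕜] [CompleteSpace 𝕜]
  {l m o : Type*} [Fintype l] [Fintype m] [Fintype o]
  {E : Type*} [NormedAddCommGroup E] [NormedSpace 𝕜 E]

variable (𝕜 l m o) in
def Matrix.mulCLM : Matrix l m 𝕜 →L[𝕜] Matrix m o 𝕜 →L[𝕜] Matrix l o 𝕜 :=
  LinearMap.toContinuousLinearMap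
    ((LinearMap.toContinuousLinearMap : _ ≃ₗ[𝕜] _).toLinearMap ∘ₗ mulLinearMap 𝕜)

theorem HasFDerivAt.matrix_mul {f : E → Matrix l m 𝕜} {g : E → Matrix m o 𝕜}
    {f' : E →L[𝕜] Matrix l m 𝕜} {g' : E →L[𝕜] Matrix m o 𝕜} {x : E}
    (hf : HasFDerivAt f f' x) (hg : HasFDerivAt g g' x) :
    HasFDerivAt (fun y => f y * g y)
      ((mulCLM 𝕜 l m o).precompR E (f x) g' + (mulCLM 𝕜 l m o).precompL E f' (g x)) x :=
  (mulCLM 𝕜 l m o).hasFDerivAt_of_bilinear hf hg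

theorem RingEquiv.map_ringInverse {R S : Type*} [Semiring R] [Semiring S] (e : R ≃+* S) (a : R) :
    e (Ring.inverse a) = Ring.inverse (e a) := by
  by_cases ha : IsUnit a
  · obtain ⟨u, rfl⟩ := ha
    rw [Ring.inverse_unit]
    exact (Ring.inverse_unit (Units.map (e : R →* S) u)).symm
  · rw [Ring.inverse_non_unit _ ha, Ring.inverse_non_unit _ ((MulEquiv.isUnit_map e).not.mpr ha),
      map_zero]

variable [DecidableEq m]

variable (𝕜 m) in
/-- Unlike `Matrix m m 𝕜` with its entrywise norm, the target is a complete normed algebra, where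
`hasFDerivAt_ringInverse` applies. -/
def Matrix.toCLMAlgEquiv : Matrix m m 𝕜 ≃ₐ[𝕜] ((m → 𝕜) →L[𝕜] (m → 𝕜)) :=
  Matrix.toLinAlgEquiv'.trans (Module.End.toContinuousLinearMap (m → 𝕜))

theorem Matrix.toCLMAlgEquiv_nonsing_inv (A : Matrix m m 𝕜) :
    toCLMAlgEquiv 𝕜 m A⁻¹ = Ring.inverse (toCLMAlgEquiv 𝕜 m A) := by
  rw [nonsing_inv_eq_ringInverse]
  exact RingEquiv.map_ringInverse (toCLMAlgEquiv 𝕜 m).toRingEquiv A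

theorem hasFDerivAt_matrix_inv {g : Matrix m m 𝕜} (hg : IsUnit g) :
    HasFDerivAt (fun A : Matrix m m 𝕜 => A⁻¹)
      (-((mulCLM 𝕜 m m m).flip g⁻¹ ∘L mulCLM 𝕜 m m m g⁻¹)) g := by
  set Φ := toCLMAlgEquiv 𝕜 m
  let Φc := Φ.toLinearEquiv.toContinuousLinearEquiv
  have hinv : (fun A : Matrix m m 𝕜 => A⁻¹) = Φc.symm ∘ Ring.inverse ∘ Φc := by
    funext A
    exact Φc.eq_symm_apply.mpr (toCLMAlgEquiv_nonsing_inv A)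
  obtain ⟨u, hu⟩ := (MulEquiv.isUnit_map Φ).mpr hg
  have hu_inv : (↑u⁻¹ : (m → 𝕜) →L[𝕜] m → 𝕜) = Φ g⁻¹ := by
    rw [← Ring.inverse_unit, hu, toCLMAlgEquiv_nonsing_inv]
  have hΦ := hasFDerivAt_ringInverse (𝕜 := 𝕜) u
  rw [hu] at hΦ
  rw [hinv]
  refine (Φc.symm.hasFDerivAt.comp g (hΦ.comp g Φc.hasFDerivAt)).congr_fderiv ?_
  ext1 v
  change -Φc.symm (↑u⁻¹ * Φ v * ↑u⁻¹) = -(g⁻¹ * v * g⁻¹)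
  rw [hu_inv, ← map_mul, ← map_mul]
  exact congrArg Neg.neg (Φc.symm_apply_apply _)

end MatrixCalculus

section Conjugation

variable {𝕜 : Type*} [NontriviallyNormedField 𝕜] [CompleteSpace 𝕜]
  {m : Type*} [Fintype m] [DecidableEq m]

def conjMap (q : Matrix m m 𝕜 × Matrix m m 𝕜) : Matrix m m 𝕜 := q.1 * q.2 * q.1⁻¹

def conjTangent (q : Matrix m m 𝕜 × Matrix m m 𝕜) :
    (Matrix m m 𝕜 × Matrix m m 𝕜) →L[𝕜] Matrix m m 𝕜 :=
  LinearMap.toContinuousLinearMap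
    { toFun := fun v => v.1 * q.2 * q.1⁻¹ + q.1 * v.2 * q.1⁻¹ - conjMap q * v.1 * q.1⁻¹
      map_add' := fun v w => by
        simp only [Prod.fst_add, Prod.snd_add, Matrix.add_mul, Matrix.mul_add]
        abel
      map_smul' := fun c v => by
        simp only [Prod.smul_fst, Prod.smul_snd, Matrix.smul_mul, Matrix.mul_smul, smul_sub,
          smul_add, RingHom.id_apply] }

@[simp]
theorem conjTangent_apply (q v : Matrix m m 𝕜 × Matrix m m 𝕜) :
    conjTangent q v = v.1 * q.2 * q.1⁻¹ + q.1 * v.2 * q.1⁻¹ - conjMap q * v.1 * q.1⁻¹ :=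
  rfl

theorem hasFDerivAt_conjMap {q : Matrix m m 𝕜 × Matrix m m 𝕜} (hq : IsUnit q.1) :
    HasFDerivAt conjMap (conjTangent q) q := by
  have hfst := (ContinuousLinearMap.fst 𝕜 (Matrix m m 𝕜) (Matrix m m 𝕜)).hasFDerivAt (x := q)
  have hsnd := (ContinuousLinearMap.snd 𝕜 (Matrix m m 𝕜) (Matrix m m 𝕜)).hasFDerivAt (x := q)
  refine ((hfst.matrix_mul hsnd).matrix_mul
    ((hasFDerivAt_matrix_inv hq).comp q hfst)).congr_fderiv ?_
  refine ContinuousLinearMap.ext fun v => ?_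
  change q.1 * q.2 * -(q.1⁻¹ * v.1 * q.1⁻¹) + (q.1 * v.2 + v.1 * q.2) * q.1⁻¹ =
    v.1 * q.2 * q.1⁻¹ + q.1 * v.2 * q.1⁻¹ - q.1 * q.2 * q.1⁻¹ * v.1 * q.1⁻¹
  noncomm_ring

theorem trace_mul_conjTangent {q : Matrix m m 𝕜 × Matrix m m 𝕜} (hq : IsUnit q.1)
    (X : Matrix m m 𝕜) (v : Matrix m m 𝕜 × Matrix m m 𝕜) :
    trace (X * conjTangent q v) =
      trace ((conjMap q * X - X * conjMap q) * (v.1 * q.1⁻¹)) + trace (q.1⁻¹ * X * q.1 * v.2) := by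
  have hg : q.1⁻¹ * q.1 = 1 := nonsing_inv_mul _ ((isUnit_iff_isUnit_det _).mp hq)
  have hg_dir : trace (X * (v.1 * q.2 * q.1⁻¹)) = trace (conjMap q * X * (v.1 * q.1⁻¹)) :=
    calc trace (X * (v.1 * q.2 * q.1⁻¹)) = trace (X * v.1 * (q.2 * q.1⁻¹)) := by
          simp only [Matrix.mul_assoc]
      _ = trace (q.2 * q.1⁻¹ * (X * v.1)) := trace_mul_comm _ _
      _ = trace (q.2 * q.1⁻¹ * X * v.1 * q.1⁻¹ * q.1) := by
          rw [Matrix.mul_assoc _ q.1⁻¹ q.1, hg, Matrix.mul_one]; simp only [Matrix.mul_assoc]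
      _ = trace (q.1 * (q.2 * q.1⁻¹ * X * v.1 * q.1⁻¹)) := trace_mul_comm _ _
      _ = trace (conjMap q * X * (v.1 * q.1⁻¹)) := by simp only [conjMap, Matrix.mul_assoc]
  have hY_dir : trace (X * (q.1 * v.2 * q.1⁻¹)) = trace (q.1⁻¹ * X * q.1 * v.2) := by
    rw [← Matrix.mul_assoc, trace_mul_comm, ← Matrix.mul_assoc, ← Matrix.mul_assoc,
      Matrix.mul_assoc]
  rw [conjTangent_apply, Matrix.mul_sub, Matrix.mul_add, trace_sub, trace_add, hg_dir, hY_dir,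
    Matrix.sub_mul, trace_sub]
  simp only [Matrix.mul_assoc]
  ring

end Conjugation

theorem Fin.eq_zero_of_forall_castSucc_eq_succ {k : ℕ} {α : Type*} {f : Fin (k + 1) → α}
    (h : ∀ i : Fin k, f i.castSucc = f i.succ) (j : Fin (k + 1)) : f j = f 0 := by
  induction j using Fin.induction with
  | zero => rfl
  | succ i ih => rw [← h i, ih]

section Braid

variable {n ℓ' : ℕ}

theorem forall_trace_mul_mem_strictUpperSub_eq_zero_iff (M : Matrix (Fin n) (Fin n) ℂ) :
    (∀ η ∈ strictUpperSub n, trace (M * η) = 0) ↔ M.IsUpperTriangular := by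
  constructor
  · intro h a b hba
    have hmem : single b a (1 : ℂ) ∈ strictUpperSub n := by
      rintro i j hji
      simp only [single_apply, ite_eq_right_iff, and_imp]
      rintro rfl rfl
      exact absurd hji (not_le.mpr hba)
    simpa [trace_mul_single] using h _ hmem
  · intro hM η hη
    refine Finset.sum_eq_zero fun k _ => ?_
    rw [diag_apply, mul_apply]
    refine Finset.sum_eq_zero fun j _ => ?_
    rcases le_or_gt k j with hkj | hjk
    · rw [hη j k hkj, mul_zero]
    · rw [hM hjk, zero_mul]

theorem forall_trace_mul_conjTangent_eq_zero_iff (X : Matrix (Fin n) (Fin n) ℂ)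
    {q : Matrix (Fin n) (Fin n) ℂ × Matrix (Fin n) (Fin n) ℂ} (hq : IsUnit q.1) :
    (∀ w, w.2 ∈ strictUpperSub n → trace (X * conjTangent q w) = 0) ↔
      Commute X (conjMap q) ∧ (q.1⁻¹ * X * q.1).IsUpperTriangular := by
  have hg : q.1 * q.1⁻¹ = 1 := mul_nonsing_inv _ ((isUnit_iff_isUnit_det _).mp hq)
  simp only [trace_mul_conjTangent hq]
  rw [← forall_trace_mul_mem_strictUpperSub_eq_zero_iff]
  constructor
  · intro H
    refine ⟨?_, fun η hη => by simpa using H (0, η) hη⟩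
    -- testing against `h = k g` isolates `Tr([A, X] k)`
    have hcomm : conjMap q * X - X * conjMap q = 0 := ext_iff_trace_mul_right.mpr fun k => by
      simpa [Matrix.mul_assoc, hg] using H (k * q.1, 0) (zero_mem _)
    exact (sub_eq_zero.mp hcomm).symm
  · rintro ⟨hcomm, hlow⟩ w hw
    rw [hcomm.eq, sub_self, Matrix.zero_mul, trace_zero, zero_add, hlow w.2 hw]

def braidSlot (n ℓ' : ℕ) (j : Fin (ℓ' + 2)) :
    braidSpace n ℓ' →L[ℂ] Matrix (Fin n) (Fin n) ℂ × Matrix (Fin n) (Fin n) ℂ :=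
  ((ContinuousLinearMap.id ℂ _).prodMap (strictUpperSub n).subtypeL).comp
    ((ContinuousLinearMap.proj j).comp (ContinuousLinearMap.snd ℂ _ _))

theorem fderiv_braidPotential_apply {p : braidSpace n ℓ'} (hp : ∀ j, IsUnit (p.2 j).1)
    (i : Fin (ℓ' + 1)) (v : braidSpace n ℓ') :
    fderiv ℂ (braidPotential n ℓ' i) p v =
      trace (p.1 * (conjTangent (braidSlot n ℓ' i.castSucc p)
            ((v.2 i.castSucc).1, (v.2 i.castSucc).2)
          - conjTangent (braidSlot n ℓ' i.succ p) ((v.2 i.succ).1, (v.2 i.succ).2))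
        + v.1 * (conjMap (braidSlot n ℓ' i.castSucc p) - conjMap (braidSlot n ℓ' i.succ p))) := by
  have hA := fun j => (hasFDerivAt_conjMap (hp j)).comp p (braidSlot n ℓ' j).hasFDerivAt
  have hX := (ContinuousLinearMap.fst ℂ (Matrix (Fin n) (Fin n) ℂ)
    (Fin (ℓ' + 2) → Matrix (Fin n) (Fin n) ℂ × strictUpperSub n)).hasFDerivAt (x := p)
  have hW : HasFDerivAt (braidPotential n ℓ' i) _ p :=
    (traceLinearMap (Fin n) ℂ ℂ).toContinuousLinearMap.hasFDerivAt.comp p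
      (hX.matrix_mul ((hA i.castSucc).sub (hA i.succ)))
  rw [hW.fderiv]
  rfl

theorem fderiv_braidPotential_eq_zero_iff {p : braidSpace n ℓ'} (hp : ∀ j, IsUnit (p.2 j).1)
    (i : Fin (ℓ' + 1)) :
    fderiv ℂ (braidPotential n ℓ' i) p = 0 ↔
      conjMap (braidSlot n ℓ' i.castSucc p) = conjMap (braidSlot n ℓ' i.succ p) ∧
      (∀ w, w.2 ∈ strictUpperSub n →
        trace (p.1 * conjTangent (braidSlot n ℓ' i.castSucc p) w) = 0) ∧
      (∀ w, w.2 ∈ strictUpperSub n →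
        trace (p.1 * conjTangent (braidSlot n ℓ' i.succ p) w) = 0) := by
  have hne : i.succ ≠ i.castSucc := Fin.castSucc_lt_succ.ne'
  constructor
  · intro hD
    have H := fun v => by simpa [hD] using (fderiv_braidPotential_apply hp i v).symm
    refine ⟨?_, fun w hw => ?_, fun w hw => ?_⟩
    · refine sub_eq_zero.mp (ext_iff_trace_mul_left.mpr fun ξ => ?_)
      simpa using H (ξ, 0)
    · simpa [hne] using H (0, Pi.single i.castSucc (w.1, ⟨w.2, hw⟩))
    · rw [conjTangent_apply, ← neg_sub, Matrix.mul_neg, trace_neg, neg_eq_zero]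
      simpa [hne.symm] using H (0, Pi.single i.succ (w.1, ⟨w.2, hw⟩))
  · rintro ⟨hA, hcs, hs⟩
    refine ContinuousLinearMap.ext fun v => ?_
    rw [fderiv_braidPotential_apply hp, hA, sub_self, Matrix.mul_zero, add_zero, Matrix.mul_sub,
      trace_sub, hcs _ (v.2 i.castSucc).2.2, hs _ (v.2 i.succ).2.2, sub_self]
    rfl

end Braid

theorem braid_potential_critical_locus_general
    (n ℓ' : ℕ) (p : braidSpace n ℓ')
    (hp : ∀ i : Fin (ℓ' + 2), IsUnit (p.2 i).1) :
    (∀ i : Fin (ℓ' + 1), fderiv ℂ (braidPotential n ℓ' i) p = 0) ↔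
      ((∀ i : Fin (ℓ' + 1),
          (p.2 i.castSucc).1 * ((p.2 i.castSucc).2 : Matrix (Fin n) (Fin n) ℂ)
              * ((p.2 i.castSucc).1)⁻¹
            = (p.2 i.succ).1 * ((p.2 i.succ).2 : Matrix (Fin n) (Fin n) ℂ)
              * ((p.2 i.succ).1)⁻¹) ∧
        (∀ i : Fin (ℓ' + 2), ∀ a b : Fin n, b < a →
          (((p.2 i).1)⁻¹ * p.1 * (p.2 i).1) a b = 0) ∧
        (p.1 * ((p.2 0).1 * ((p.2 0).2 : Matrix (Fin n) (Fin n) ℂ) * ((p.2 0).1)⁻¹)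
          = ((p.2 0).1 * ((p.2 0).2 : Matrix (Fin n) (Fin n) ℂ) * ((p.2 0).1)⁻¹) * p.1)) := by
  have hslot := fun j =>
    forall_trace_mul_conjTangent_eq_zero_iff p.1 (q := braidSlot n ℓ' j p) (hp j)
  simp only [fderiv_braidPotential_eq_zero_iff hp, hslot]
  constructor
  · intro H
    refine ⟨fun i => (H i).1, fun j => ?_, (H 0).2.1.1⟩
    induction j using Fin.lastCases with
    | last => exact (H (Fin.last ℓ')).2.2.2
    | cast i => exact (H i).2.1.2
  · rintro ⟨ha, hlow, hc⟩ i
    have hA := Fin.eq_zero_of_forall_castSucc_eq_succ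
      (f := fun j => conjMap (braidSlot n ℓ' j p)) ha
    refine ⟨ha i, ⟨?_, hlow _⟩, ⟨?_, hlow _⟩⟩ <;> rw [hA] <;> exact hc

/-- **The critical locus of the braid potentials.**  At a point `p` with all group matrices
invertible, the Fréchet derivatives of all intermediate potentials `W_{i,i+1}` vanish
simultaneously if and only if: (a) `Ad_{gᵢ}(Yᵢ)` is independent of `i`;
(b) `(gᵢ⁻¹Xgᵢ)₋₋ = 0` for all `i`; (c) `[X, Ad_{g₁}(Y₁)] = 0`. -/
theorem braid_potential_critical_locus
    (n ℓ' : ℕ) (hn : 1 ≤ n) (p : braidSpace n ℓ')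
    (hp : ∀ i : Fin (ℓ' + 2), IsUnit (p.2 i).1) :
    (∀ i : Fin (ℓ' + 1), fderiv ℂ (braidPotential n ℓ' i) p = 0) ↔
      ((∀ i : Fin (ℓ' + 1),
          (p.2 i.castSucc).1 * ((p.2 i.castSucc).2 : Matrix (Fin n) (Fin n) ℂ)
              * ((p.2 i.castSucc).1)⁻¹
            = (p.2 i.succ).1 * ((p.2 i.succ).2 : Matrix (Fin n) (Fin n) ℂ)
              * ((p.2 i.succ).1)⁻¹) ∧
        (∀ i : Fin (ℓ' + 2), ∀ a b : Fin n, b < a →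
          (((p.2 i).1)⁻¹ * p.1 * (p.2 i).1) a b = 0) ∧
        (p.1 * ((p.2 0).1 * ((p.2 0).2 : Matrix (Fin n) (Fin n) ℂ) * ((p.2 0).1)⁻¹)
          = ((p.2 0).1 * ((p.2 0).2 : Matrix (Fin n) (Fin n) ℂ) * ((p.2 0).1)⁻¹) * p.1)) :=
  braid_potential_critical_locus_general n ℓ' p hp

end
end

section
/- Let R be a commutative ring. Let X = [[x₁₁, x₁₂],[0, x₂₂]] and Y = [[0, y],[0, 0]] be 2×2 matrices over R, and let g be any 2×2 matrix over R with entries gᵢⱼ and adjugate adj(g). Then Tr(X · g · Y · adj(g)) = −y · g₂₁ · (g₁₁(x₁₁ − x₂₂) + g₂₁x₁₂). In particular, if g is invertible then det(g) · Tr(X · g Y g⁻¹) = −y · g₂₁ · (g₁₁(x₁₁ − x₂₂) + g₂₁x₁₂), so the two-strand potential W̄(X,g,Y) = Tr(X · Ad_g(Y)) factors, up to sign and the unit det(g), as the product of y, the matrix entry g₂₁, and the linear form g₁₁(x₁₁ − x₂₂) + g₂₁x₁₂. -/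
/-- **Factorization of the two-strand potential.**  For
`X = [[x₁₁, x₁₂],[0, x₂₂]]`, `Y = [[0, y],[0, 0]]` and any `2 × 2` matrix `g`:
`Tr(X·g·Y·adj(g)) = −y·g₂₁·(g₁₁(x₁₁ − x₂₂) + g₂₁x₁₂)`; and if `g` is invertible then
`det(g)·Tr(X·gYg⁻¹)` equals the same expression. -/
theorem two_strand_potential_factors
    {R : Type*} [CommRing R] (x₁₁ x₁₂ x₂₂ y : R) (g : Matrix (Fin 2) (Fin 2) R) :
    Matrix.trace (!![x₁₁, x₁₂; 0, x₂₂] * g * !![(0 : R), y; 0, 0] * g.adjugate)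
        = -(y * g 1 0 * (g 0 0 * (x₁₁ - x₂₂) + g 1 0 * x₁₂)) ∧
      (IsUnit g.det →
        g.det * Matrix.trace (!![x₁₁, x₁₂; 0, x₂₂] * (g * !![(0 : R), y; 0, 0] * g⁻¹))
          = -(y * g 1 0 * (g 0 0 * (x₁₁ - x₂₂) + g 1 0 * x₁₂))) := by
  have key : Matrix.trace (!![x₁₁, x₁₂; 0, x₂₂] * g * !![(0 : R), y; 0, 0] * g.adjugate)
      = -(y * g 1 0 * (g 0 0 * (x₁₁ - x₂₂) + g 1 0 * x₁₂)) := by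
    have hg : g = !![g 0 0, g 0 1; g 1 0, g 1 1] := by
      ext i j; fin_cases i <;> fin_cases j <;> simp
    rw [hg]
    simp [Matrix.adjugate_fin_two, Matrix.trace_fin_two, Matrix.mul_fin_two]
    ring
  refine ⟨key, fun h => ?_⟩
  have : g⁻¹ = Ring.inverse g.det • g.adjugate := Matrix.inv_def g
  rw [this, Matrix.mul_smul, Matrix.mul_smul, Matrix.trace_smul, smul_eq_mul,
    ← mul_assoc, Ring.mul_inverse_cancel _ h, one_mul, ← key]
  simp [mul_assoc]
end

section
/- Let K be a field, X a 3×3 upper-triangular matrix over K with diagonal entries x₁₁, x₂₂, x₃₃ and above-diagonal entries x₁₂, x₁₃, x₂₃, and a an invertible 3×3 matrix over K with det(a) = 1, entries aᵢⱼ and inverse entries (a⁻¹)ᵢⱼ. If a₃₁ = 0, (x₁₁ − x₂₂)a₁₁ + x₁₂a₂₁ = 0, and (a⁻¹)₃₃(x₁₁ − x₃₃) − (a⁻¹)₃₂x₂₃ − (a⁻¹)₃₁x₁₃ = 0, then a⁻¹Xa is upper triangular. -/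
set_option maxHeartbeats 1000000


/-- **The equations of the ideal `I₁₂` force `Ad_{a⁻¹}(X)` to be upper triangular.**
For `X` upper triangular `3 × 3` and `a ∈ SL₃(K)`, if `a₃₁ = 0`,
`(x₁₁ − x₂₂)a₁₁ + x₁₂a₂₁ = 0` and
`(a⁻¹)₃₃(x₁₁ − x₃₃) − (a⁻¹)₃₂x₂₃ − (a⁻¹)₃₁x₁₃ = 0`, then `a⁻¹Xa` is upper triangular. -/
theorem ideal_I12_implies_borel
    {K : Type*} [Field K]
    (X a : Matrix (Fin 3) (Fin 3) K)
    (hX : ∀ i j, j < i → X i j = 0)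
    (ha : a.det = 1)
    (h1 : a 2 0 = 0)
    (h2 : (X 0 0 - X 1 1) * a 0 0 + X 0 1 * a 1 0 = 0)
    (h3 : a⁻¹ 2 2 * (X 0 0 - X 2 2) - a⁻¹ 2 1 * X 1 2 - a⁻¹ 2 0 * X 0 2 = 0) :
    ∀ i j, j < i → (a⁻¹ * X * a) i j = 0 := by
  have hdet : IsUnit a.det := by rw [ha]; exact isUnit_one
  have hb : a⁻¹ * a = 1 := Matrix.nonsing_inv_mul a hdet
  have e : ∀ i j : Fin 3, a⁻¹ i 0 * a 0 j + a⁻¹ i 1 * a 1 j + a⁻¹ i 2 * a 2 j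
      = (1 : Matrix (Fin 3) (Fin 3) K) i j := by
    intro i j
    have := congrFun (congrFun hb i) j
    simpa [Matrix.mul_apply, Fin.sum_univ_three] using this
  have e10 := e 1 0
  have e20 := e 2 0
  have e21 := e 2 1
  rw [show ((1 : Matrix (Fin 3) (Fin 3) K) 1 0) = 0 by simp] at e10
  rw [show ((1 : Matrix (Fin 3) (Fin 3) K) 2 0) = 0 by simp] at e20
  rw [show ((1 : Matrix (Fin 3) (Fin 3) K) 2 1) = 0 by simp] at e21
  have x10 : X 1 0 = 0 := hX 1 0 (by decide)
  have x20 : X 2 0 = 0 := hX 2 0 (by decide)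
  have x21 : X 2 1 = 0 := hX 2 1 (by decide)
  -- key correction term
  have hc : a⁻¹ 2 0 * X 0 1 + (X 1 1 - X 0 0) * a⁻¹ 2 1 = 0 := by
    by_cases h10 : a 1 0 = 0
    · -- then a 0 0 ≠ 0, so X 0 0 = X 1 1 and a⁻¹ 2 0 = 0
      have hdet3 : a 0 0 * (a 1 1 * a 2 2 - a 1 2 * a 2 1) = 1 := by
        have := ha
        rw [Matrix.det_fin_three] at this
        linear_combination this + (a 0 2 * a 1 1 - a 0 1 * a 1 2) * h1
          + (a 0 1 * a 2 2 - a 0 2 * a 2 1) * h10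
      have h00 : a 0 0 ≠ 0 := by
        intro h; rw [h, zero_mul] at hdet3; exact one_ne_zero hdet3.symm
      have hx : X 0 0 = X 1 1 := by
        have : (X 0 0 - X 1 1) * a 0 0 = 0 := by linear_combination h2 - X 0 1 * h10
        rcases mul_eq_zero.mp this with h | h
        · exact sub_eq_zero.mp h
        · exact absurd h h00
      have hb20 : a⁻¹ 2 0 = 0 := by
        have : a⁻¹ 2 0 * a 0 0 = 0 := by
          linear_combination e20 - a⁻¹ 2 1 * h10 - a⁻¹ 2 2 * h1
        rcases mul_eq_zero.mp this with h | h
        · exact h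
        · exact absurd h h00
      rw [hb20, hx]; ring
    · -- then c * a10 = 0
      have hca : (a⁻¹ 2 0 * X 0 1 + (X 1 1 - X 0 0) * a⁻¹ 2 1) * a 1 0 = 0 := by
        linear_combination a⁻¹ 2 0 * h2 + (X 1 1 - X 0 0) * e20
          + (X 0 0 - X 1 1) * a⁻¹ 2 2 * h1
      exact (mul_eq_zero.mp hca).resolve_right h10
  have m10 : (a⁻¹ * X * a) 1 0 = 0 := by
    simp only [Matrix.mul_apply, Fin.sum_univ_three]
    linear_combination X 1 1 * e10 + a⁻¹ 1 0 * h2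
      + (a⁻¹ 1 0 * X 0 2 + a⁻¹ 1 1 * X 1 2 + a⁻¹ 1 2 * X 2 2 - X 1 1 * a⁻¹ 1 2) * h1
      + a⁻¹ 1 1 * a 0 0 * x10 + a⁻¹ 1 2 * a 0 0 * x20 + a⁻¹ 1 2 * a 1 0 * x21
  have m20 : (a⁻¹ * X * a) 2 0 = 0 := by
    simp only [Matrix.mul_apply, Fin.sum_univ_three]
    linear_combination X 1 1 * e20 + a⁻¹ 2 0 * h2
      + (a⁻¹ 2 0 * X 0 2 + a⁻¹ 2 1 * X 1 2 + a⁻¹ 2 2 * X 2 2 - X 1 1 * a⁻¹ 2 2) * h1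
      + a⁻¹ 2 1 * a 0 0 * x10 + a⁻¹ 2 2 * a 0 0 * x20 + a⁻¹ 2 2 * a 1 0 * x21
  have m21 : (a⁻¹ * X * a) 2 1 = 0 := by
    simp only [Matrix.mul_apply, Fin.sum_univ_three]
    linear_combination X 0 0 * e21 + a 1 1 * hc - a 2 1 * h3
      + a⁻¹ 2 1 * a 0 1 * x10 + a⁻¹ 2 2 * a 0 1 * x20 + a⁻¹ 2 2 * a 1 1 * x21
  intro i j hij
  fin_cases i <;> fin_cases j
  · exact absurd hij (by decide)
  · exact absurd hij (by decide)
  · exact absurd hij (by decide)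
  · exact m10
  · exact absurd hij (by decide)
  · exact absurd hij (by decide)
  · exact m20
  · exact m21
  · exact absurd hij (by decide)
end

section
/- Let K be a field, X a 3×3 upper-triangular matrix over K with diagonal entries x₁₁, x₂₂, x₃₃ and above-diagonal entries x₁₂, x₁₃, x₂₃, and a an invertible 3×3 matrix over K with det(a) = 1, entries aᵢⱼ and inverse entries (a⁻¹)ᵢⱼ. If (a⁻¹)₃₁ = 0, (a⁻¹)₃₂x₂₃ + (a⁻¹)₃₃(x₃₃ − x₂₂) = 0, and a₁₁(x₁₁ − x₃₃) + a₂₁x₁₂ + a₃₁x₁₃ = 0, then a⁻¹Xa is upper triangular. -/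
set_option maxHeartbeats 1000000 in
/-- **The equations of the ideal `I₂₁` force `Ad_{a⁻¹}(X)` to be upper triangular.**
For `X` upper triangular `3 × 3` and `a ∈ SL₃(K)`, if `(a⁻¹)₃₁ = 0`,
`(a⁻¹)₃₂x₂₃ + (a⁻¹)₃₃(x₃₃ − x₂₂) = 0` and
`a₁₁(x₁₁ − x₃₃) + a₂₁x₁₂ + a₃₁x₁₃ = 0`, then `a⁻¹Xa` is upper triangular. -/
theorem ideal_I21_implies_borel
    {K : Type*} [Field K]
    (X a : Matrix (Fin 3) (Fin 3) K)
    (hX : ∀ i j, j < i → X i j = 0)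
    (ha : a.det = 1)
    (h1 : a⁻¹ 2 0 = 0)
    (h2 : a⁻¹ 2 1 * X 1 2 + a⁻¹ 2 2 * (X 2 2 - X 1 1) = 0)
    (h3 : a 0 0 * (X 0 0 - X 2 2) + a 1 0 * X 0 1 + a 2 0 * X 0 2 = 0) :
    ∀ i j, j < i → (a⁻¹ * X * a) i j = 0 := by
  have hinv : a⁻¹ = a.adjugate := by
    rw [Matrix.inv_def, ha, Ring.inverse_one, one_smul]
  have hX10 := hX 1 0 (by decide)
  have hX20 := hX 2 0 (by decide)
  have hX21 := hX 2 1 (by decide)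
  rw [hinv] at h1 h2 ⊢
  rw [Matrix.det_fin_three] at ha
  rw [Matrix.adjugate_fin_three] at h1 h2
  simp at h1 h2
  have e10 : (a.adjugate * X * a) 1 0 = 0 := by
    simp [Matrix.mul_apply, Fin.sum_univ_three, Matrix.adjugate_fin_three,
      Matrix.vecMul, dotProduct, hX10, hX20, hX21]
    linear_combination (a 1 2 * a 2 0 - a 1 0 * a 2 2) * h3 +
      ((a 1 2 * a 2 0 - a 1 0 * a 2 2) * (a 0 0 * a 2 2 - a 0 2 * a 2 0)) * h2 +
      ((a 0 0 * a 2 2 - a 0 2 * a 2 0) *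
        ((a 0 2 * a 1 0 - a 0 0 * a 1 2) * (X 1 1 - X 2 2) -
         (a 0 0 * a 2 2 - a 0 2 * a 2 0) * X 1 2)) * h1 -
      ((a 0 0 * a 2 2 - a 0 2 * a 2 0) *
        (a 1 0 * (X 1 1 - X 2 2) + a 2 0 * X 1 2)) * ha
  have e20 : (a.adjugate * X * a) 2 0 = 0 := by
    simp [Matrix.mul_apply, Fin.sum_univ_three, Matrix.adjugate_fin_three,
      Matrix.vecMul, dotProduct, hX10, hX20, hX21]
    linear_combination
      (X 0 0 * a 0 0 + X 0 1 * a 1 0 + X 0 2 * a 2 0 - X 1 1 * a 0 0) * h1 + a 2 0 * h2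
  have e21 : (a.adjugate * X * a) 2 1 = 0 := by
    simp [Matrix.mul_apply, Fin.sum_univ_three, Matrix.adjugate_fin_three,
      Matrix.vecMul, dotProduct, hX10, hX20, hX21]
    linear_combination
      (X 0 0 * a 0 1 + X 0 1 * a 1 1 + X 0 2 * a 2 1 - X 1 1 * a 0 1) * h1 + a 2 1 * h2
  intro i j hij
  fin_cases i <;> fin_cases j
  · exact absurd hij (by decide)
  · exact absurd hij (by decide)
  · exact absurd hij (by decide)
  · exact e10
  · exact absurd hij (by decide)
  · exact absurd hij (by decide)
  · exact e20
  · exact e21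
  · exact absurd hij (by decide)
end

section
/- Let R be the quotient of the polynomial ring over ℂ in the 15 variables x₁₁, x₁₂, x₁₃, x₂₂, x₂₃, x₃₃ and aᵢⱼ (1 ≤ i,j ≤ 3) by the ideal generated by det(a) − 1, where a = (aᵢⱼ) is the generic 3×3 matrix; write a⁻¹ for the adjugate of a, and let X be the generic upper-triangular 3×3 matrix with entries xᵢⱼ (i ≤ j). Define fᵢ = (a⁻¹(X − x₂₂·1)a)₂ᵢ and hᵢ = (a⁻¹(X − x₁₁·1))₃ᵢ. Then in R the ideal I₁₂₁ = (f₁, f₂, h₂, h₃) equals the ideal I generated by the six elements (a⁻¹Xa)₃₁, (a⁻¹Xa)₃₂, (a⁻¹Xa)₃₃ − x₁₁, (a⁻¹Xa)₂₁, (a⁻¹Xa)₂₂ − x₂₂, and (a⁻¹Xa)₁₁ − x₃₃. -/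
set_option synthInstance.maxHeartbeats 1000000
set_option maxHeartbeats 2000000


/-- Index type for the variables of `ℂ[𝔟₃ × SL₃]`: the six entries `xᵢⱼ` (`i ≤ j`) of the
generic upper-triangular matrix and the nine entries `aᵢⱼ` of the generic matrix. -/
abbrev BorelSL3Vars : Type :=
  {p : Fin 3 × Fin 3 // p.1 ≤ p.2} ⊕ (Fin 3 × Fin 3)

/-- The polynomial ring in the 15 variables. -/
abbrev BorelSL3Poly : Type := MvPolynomial BorelSL3Vars ℂ

/-- The generic `3 × 3` matrix `a` over the polynomial ring. -/
noncomputable def genA : Matrix (Fin 3) (Fin 3) BorelSL3Poly :=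
  fun i j => MvPolynomial.X (Sum.inr (i, j))

/-- The generic upper-triangular `3 × 3` matrix `X` over the polynomial ring. -/
noncomputable def genX : Matrix (Fin 3) (Fin 3) BorelSL3Poly :=
  fun i j => if h : i ≤ j then MvPolynomial.X (Sum.inl ⟨(i, j), h⟩) else 0

/-- The coordinate ring `R = ℂ[𝔟₃ × SL₃]`, the quotient by the ideal `(det a − 1)`. -/
abbrev BorelSL3Ring : Type :=
  BorelSL3Poly ⧸ Ideal.span {genA.det - 1}

/-- The matrix `a` over `R`. -/
noncomputable def aR : Matrix (Fin 3) (Fin 3) BorelSL3Ring :=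
  genA.map (Ideal.Quotient.mk (Ideal.span {genA.det - 1}))

/-- The matrix `X` over `R`. -/
noncomputable def xR : Matrix (Fin 3) (Fin 3) BorelSL3Ring :=
  genX.map (Ideal.Quotient.mk (Ideal.span {genA.det - 1}))

/-- The inverse of `a` in `R`: since `det a = 1` in `R`, it is the adjugate. -/
noncomputable def aInv : Matrix (Fin 3) (Fin 3) BorelSL3Ring := aR.adjugate

/-- `fᵢ = (a⁻¹(X − x₂₂·1)a)₂ᵢ` (here `i` is 1-based as in the paper). -/
noncomputable def fEl (i : Fin 3) : BorelSL3Ring :=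
  (aInv * (xR - xR 1 1 • (1 : Matrix (Fin 3) (Fin 3) BorelSL3Ring)) * aR) 1 i

/-- `hᵢ = (a⁻¹(X − x₁₁·1))₃ᵢ` (here `i` is 1-based as in the paper). -/
noncomputable def hEl (i : Fin 3) : BorelSL3Ring :=
  (aInv * (xR - xR 0 0 • (1 : Matrix (Fin 3) (Fin 3) BorelSL3Ring))) 2 i

lemma det_aR : aR.det = 1 := by
  have h1 : aR.det = (Ideal.Quotient.mk (Ideal.span {genA.det - 1})) genA.det :=
    ((Ideal.Quotient.mk (Ideal.span {genA.det - 1})).map_det genA).symm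
  have h2 : (Ideal.Quotient.mk (Ideal.span {genA.det - 1})) genA.det
      = (Ideal.Quotient.mk (Ideal.span {genA.det - 1})) 1 :=
    Ideal.Quotient.eq.2 (Ideal.subset_span rfl)
  rw [h1, h2, map_one]

lemma aInv_mul : aInv * aR = 1 := by
  rw [aInv, Matrix.adjugate_mul, det_aR, one_smul]

lemma mul_aInv : aR * aInv = 1 := by
  rw [aInv, Matrix.mul_adjugate, det_aR, one_smul]


lemma hEl_zero : hEl 0 = 0 := by
  have h10 : xR 1 0 = 0 := by simp [xR, genX, Matrix.map_apply]
  have h20 : xR 2 0 = 0 := by simp [xR, genX, Matrix.map_apply]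
  simp only [hEl, Matrix.mul_apply, Fin.sum_univ_three, Matrix.sub_apply,
    Matrix.smul_apply, Matrix.one_apply, smul_eq_mul]
  norm_num [h10, h20, show (2:Fin 3) ≠ 0 by decide, show (1:Fin 3) ≠ 0 by decide]

noncomputable def Bm : Matrix (Fin 3) (Fin 3) BorelSL3Ring := aInv * xR * aR

lemma helper1 {R : Type*} [CommRing R] {n : Type*} [Fintype n] [DecidableEq n]
    (A B C : Matrix n n R) (c : R) (hAC : A * C = 1) :
    A * (B - c • 1) * C = A * B * C - c • 1 := by
  rw [Matrix.mul_sub, Matrix.sub_mul, Matrix.mul_smul, Matrix.smul_mul, mul_one, hAC]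

lemma helper2 {R : Type*} [CommRing R] {n : Type*} [Fintype n] [DecidableEq n]
    (A B C : Matrix n n R) (c : R) (hCA : C * A = 1) :
    A * (B - c • 1) = (A * B * C - c • 1) * A := by
  rw [Matrix.sub_mul, Matrix.smul_mul, one_mul, Matrix.mul_assoc (A * B), hCA, mul_one,
    Matrix.mul_sub, Matrix.mul_smul, mul_one]

lemma f_matrix : aInv * (xR - xR 1 1 • (1 : Matrix (Fin 3) (Fin 3) BorelSL3Ring)) * aR
    = Bm - xR 1 1 • (1 : Matrix (Fin 3) (Fin 3) BorelSL3Ring) :=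
  helper1 aInv xR aR (xR 1 1) aInv_mul

lemma h_matrix : aInv * (xR - xR 0 0 • (1 : Matrix (Fin 3) (Fin 3) BorelSL3Ring))
    = (Bm - xR 0 0 • (1 : Matrix (Fin 3) (Fin 3) BorelSL3Ring)) * aInv :=
  helper2 aInv xR aR (xR 0 0) mul_aInv

lemma trace_eq : Bm 0 0 + Bm 1 1 + Bm 2 2 = xR 0 0 + xR 1 1 + xR 2 2 := by
  have : Matrix.trace Bm = Matrix.trace xR := by
    rw [Bm, Matrix.trace_mul_comm, ← Matrix.mul_assoc, mul_aInv, one_mul]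
  simpa [Matrix.trace, Fin.sum_univ_three, Matrix.diag] using this

lemma fEl_zero_eq : fEl 0 = Bm 1 0 := by
  rw [fEl, f_matrix]
  simp [Matrix.sub_apply, Matrix.smul_apply, Matrix.one_apply, smul_eq_mul,
    show (1:Fin 3) ≠ 0 by decide]

lemma fEl_one_eq : fEl 1 = Bm 1 1 - xR 1 1 := by
  rw [fEl, f_matrix]
  simp [Matrix.sub_apply, Matrix.smul_apply, Matrix.one_apply, smul_eq_mul]

lemma hEl_apply (j : Fin 3) :
    hEl j = Bm 2 0 * aInv 0 j + Bm 2 1 * aInv 1 j + (Bm 2 2 - xR 0 0) * aInv 2 j := by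
  rw [hEl, h_matrix, Matrix.mul_apply, Fin.sum_univ_three]
  simp only [Matrix.sub_apply, Matrix.smul_apply, Matrix.one_apply, smul_eq_mul]
  norm_num [show (2:Fin 3) ≠ 0 by decide, show (2:Fin 3) ≠ 1 by decide]

lemma back_eq (j : Fin 3) :
    Bm 2 j - xR 0 0 * (if (2 : Fin 3) = j then 1 else 0)
      = hEl 1 * aR 1 j + hEl 2 * aR 2 j := by
  have key : (aInv * (xR - xR 0 0 • (1 : Matrix (Fin 3) (Fin 3) BorelSL3Ring))) * aR
      = Bm - xR 0 0 • (1 : Matrix (Fin 3) (Fin 3) BorelSL3Ring) := by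
    rw [h_matrix, Matrix.mul_assoc, aInv_mul, mul_one]
  have h2 := congrFun (congrFun key 2) j
  rw [Matrix.mul_apply, Fin.sum_univ_three,
    show (aInv * (xR - xR 0 0 • (1 : Matrix (Fin 3) (Fin 3) BorelSL3Ring))) 2 0 = hEl 0 from rfl,
    show (aInv * (xR - xR 0 0 • (1 : Matrix (Fin 3) (Fin 3) BorelSL3Ring))) 2 1 = hEl 1 from rfl,
    show (aInv * (xR - xR 0 0 • (1 : Matrix (Fin 3) (Fin 3) BorelSL3Ring))) 2 2 = hEl 2 from rfl,
    hEl_zero, zero_mul, zero_add] at h2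
  simp only [Matrix.sub_apply, Matrix.smul_apply, Matrix.one_apply, smul_eq_mul] at h2
  exact h2.symm
/-- **Equality of ideals `I₁₂₁ = I` in `ℂ[𝔟₃ × SL₃]`:** the ideal generated by
`f₁, f₂, h₂, h₃` coincides with the ideal expressing that `a⁻¹Xa` is upper triangular
with diagonal `(x₃₃, x₂₂, x₁₁)`. -/
theorem ideal_I121_eq_I :
    Ideal.span {fEl 0, fEl 1, hEl 1, hEl 2}
      = Ideal.span {(aInv * xR * aR) 2 0, (aInv * xR * aR) 2 1,
          (aInv * xR * aR) 2 2 - xR 0 0, (aInv * xR * aR) 1 0,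
          (aInv * xR * aR) 1 1 - xR 1 1, (aInv * xR * aR) 0 0 - xR 2 2} := by
  have hB : aInv * xR * aR = Bm := rfl
  rw [hB]
  apply le_antisymm
  · rw [Ideal.span_le]
    have g1 : Bm 2 0 ∈ Ideal.span {Bm 2 0, Bm 2 1, Bm 2 2 - xR 0 0, Bm 1 0,
        Bm 1 1 - xR 1 1, Bm 0 0 - xR 2 2} := Ideal.subset_span (by simp)
    have g2 : Bm 2 1 ∈ Ideal.span {Bm 2 0, Bm 2 1, Bm 2 2 - xR 0 0, Bm 1 0,
        Bm 1 1 - xR 1 1, Bm 0 0 - xR 2 2} := Ideal.subset_span (by simp)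
    have g3 : Bm 2 2 - xR 0 0 ∈ Ideal.span {Bm 2 0, Bm 2 1, Bm 2 2 - xR 0 0, Bm 1 0,
        Bm 1 1 - xR 1 1, Bm 0 0 - xR 2 2} := Ideal.subset_span (by simp)
    have hh : ∀ j, hEl j ∈ Ideal.span {Bm 2 0, Bm 2 1, Bm 2 2 - xR 0 0, Bm 1 0,
        Bm 1 1 - xR 1 1, Bm 0 0 - xR 2 2} := by
      intro j
      rw [hEl_apply]
      exact add_mem (add_mem (Ideal.mul_mem_right _ _ g1) (Ideal.mul_mem_right _ _ g2))
        (Ideal.mul_mem_right _ _ g3)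
    rintro x (rfl | rfl | rfl | rfl)
    · rw [fEl_zero_eq]; exact Ideal.subset_span (by simp)
    · rw [fEl_one_eq]; exact Ideal.subset_span (by simp)
    · exact hh 1
    · exact hh 2
  · rw [Ideal.span_le]
    have h1 : hEl 1 ∈ Ideal.span {fEl 0, fEl 1, hEl 1, hEl 2} := Ideal.subset_span (by simp)
    have h2 : hEl 2 ∈ Ideal.span {fEl 0, fEl 1, hEl 1, hEl 2} := Ideal.subset_span (by simp)
    have k0 : Bm 2 0 ∈ Ideal.span {fEl 0, fEl 1, hEl 1, hEl 2} := by
      have := back_eq 0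
      norm_num [show (2:Fin 3) ≠ 0 by decide] at this
      rw [this]
      exact add_mem (Ideal.mul_mem_right _ _ h1) (Ideal.mul_mem_right _ _ h2)
    have k1 : Bm 2 1 ∈ Ideal.span {fEl 0, fEl 1, hEl 1, hEl 2} := by
      have := back_eq 1
      norm_num [show (2:Fin 3) ≠ 1 by decide] at this
      rw [this]
      exact add_mem (Ideal.mul_mem_right _ _ h1) (Ideal.mul_mem_right _ _ h2)
    have k2 : Bm 2 2 - xR 0 0 ∈ Ideal.span {fEl 0, fEl 1, hEl 1, hEl 2} := by
      have := back_eq 2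
      norm_num at this
      rw [this]
      exact add_mem (Ideal.mul_mem_right _ _ h1) (Ideal.mul_mem_right _ _ h2)
    rintro x (rfl | rfl | rfl | rfl | rfl | rfl)
    · exact k0
    · exact k1
    · exact k2
    · rw [← fEl_zero_eq]; exact Ideal.subset_span (by simp)
    · rw [← fEl_one_eq]; exact Ideal.subset_span (by simp)
    · have heq : Bm 0 0 - xR 2 2 = -(fEl 1) - (Bm 2 2 - xR 0 0) := by
        rw [fEl_one_eq]
        linear_combination trace_eq
      rw [heq]
      exact sub_mem (neg_mem (Ideal.subset_span (by simp))) k2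
end
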